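/- arXiv:2012.04061 — 5 statements merged into one kernel-verified Lean document; each statement's English description precedes it below -/
import Mathlib

section
/- For a single client running the local-momentum (SPIDER-style) recursion with an L-smooth objective f_i, if η < 1/L and E < (1/4)·min(1/(ηL), 1/(η²L²) − 1/(ηL)), then Σ_{τ=0}^{E−1} E[‖v_{k,τ}^{(i)}‖²] ≤ 16E·‖∇f_i(w_k)‖², where the expectation is over the batches B_{k,1}^{(i)},…,B_{k,E−1}^{(i)}. -/
open MeasureTheory Finset

/-!
The bound holds pathwise, before taking expectations. Since each stochastic gradient is
`L`-Lipschitz, one step of the recursion changes `v` by at most `L‖w_{τ+1} − w_τ‖ = ηL‖v_τ‖`,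
so `‖v_τ‖ ≤ (1 + ηL)^τ ‖∇f(w_k)‖`. The condition on `E` gives `EηL < 1/4`, hence
`(1 + ηL)^τ ≤ exp(1/4) < 4` for `τ < E`, and every summand is at most `16‖∇f(w_k)‖²`.
-/

theorem norm_momentum_step_le {F : Type*} [SeminormedAddCommGroup F] [NormedSpace ℝ F]
    {η L : ℝ} (hη : 0 ≤ η) {g : F → F} (hg : ∀ x y, ‖g x - g y‖ ≤ L * ‖x - y‖) (x v : F) :
    ‖g (x - η • v) + v - g x‖ ≤ (1 + η * L) * ‖v‖ :=
  calc ‖g (x - η • v) + v - g x‖ = ‖v + (g (x - η • v) - g x)‖ := by congr 1; abel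
    _ ≤ ‖v‖ + L * ‖x - η • v - x‖ := (norm_add_le _ _).trans (add_le_add_right (hg _ _) _)
    _ = (1 + η * L) * ‖v‖ := by
      rw [sub_sub_cancel_left, norm_neg, norm_smul, Real.norm_of_nonneg hη]; ring

theorem one_add_pow_le_four {c : ℝ} (hc : 0 ≤ c) {n : ℕ} (hn : n * c ≤ 1 / 4) :
    (1 + c) ^ n ≤ 4 :=
  calc (1 + c) ^ n ≤ Real.exp c ^ n := by
        gcongr; linarith [Real.add_one_le_exp c]
    _ = Real.exp (n * c) := (Real.exp_nat_mul c n).symm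
    _ ≤ Real.exp 1 := Real.exp_le_exp.mpr (by linarith)
    _ ≤ 4 := by linarith [Real.exp_one_lt_d9]

theorem integral_le_of_norm_le_const {Ω : Type*} [MeasurableSpace Ω] {μ : Measure Ω}
    [IsProbabilityMeasure μ] {f : Ω → ℝ} {C : ℝ} (h : ∀ ω, ‖f ω‖ ≤ C) : ∫ ω, f ω ∂μ ≤ C := by
  simpa using (le_abs_self _).trans
    (norm_integral_le_of_norm_le_const (μ := μ) (Filter.Eventually.of_forall h))

theorem stmt7_general
    {d : ℕ} {Bt : Type*} [MeasurableSpace Bt]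
    (μB : Measure Bt) [IsProbabilityMeasure μB]
    (E : ℕ) (η L : ℝ) (hη : 0 < η) (hL : 0 < L)
    (f : EuclideanSpace ℝ (Fin d) → ℝ)
    (G : EuclideanSpace ℝ (Fin d) → Bt → EuclideanSpace ℝ (Fin d))
    (hGlip : ∀ b x y, ‖G x b - G y b‖ ≤ L * ‖x - y‖)
    (wk : EuclideanSpace ℝ (Fin d))
    (w v : ℕ → (Fin E → Bt) → EuclideanSpace ℝ (Fin d))
    (hv0 : ∀ ω, v 0 ω = gradient f wk)
    (hv : ∀ τ (h1 : 1 ≤ τ) (h2 : τ < E), ∀ ω,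
      v τ ω = G (w τ ω) (ω ⟨τ, h2⟩) + v (τ - 1) ω - G (w (τ - 1) ω) (ω ⟨τ, h2⟩))
    (hw : ∀ τ, τ < E → ∀ ω, w (τ + 1) ω = w τ ω - η • v τ ω)
    (hEcond : (E : ℝ) < (1 / 4) * min (1 / (η * L)) (1 / (η ^ 2 * L ^ 2) - 1 / (η * L))) :
    ∑ τ ∈ Finset.range E, ∫ ω, ‖v τ ω‖ ^ 2 ∂(Measure.pi fun _ : Fin E => μB)
      ≤ 16 * (E : ℝ) * ‖gradient f wk‖ ^ 2 := by
  have hc : 0 < η * L := mul_pos hη hL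
  have hEc : E * (η * L) ≤ 1 / 4 := by
    have := hEcond.trans_le (mul_le_mul_of_nonneg_left (min_le_left _ _) (by norm_num))
    rw [← le_div_iff₀ hc]; field_simp at this ⊢; linarith
  have hgrowth : ∀ τ < E, ∀ ω, ‖v τ ω‖ ≤ (1 + η * L) ^ τ * ‖gradient f wk‖ := by
    intro τ hτ ω
    rw [← hv0 ω]
    refine le_geom (u := fun n => ‖v n ω‖) (by positivity) τ fun n hn => ?_
    have hstep := hv (n + 1) le_add_self (by omega) ω
    rw [Nat.add_sub_cancel, hw n (by omega) ω] at hstep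
    exact hstep ▸ norm_momentum_step_le hη.le (hGlip _) _ _
  have hterm : ∀ τ < E, ∀ ω, ‖‖v τ ω‖ ^ 2‖ ≤ 16 * ‖gradient f wk‖ ^ 2 := by
    intro τ hτ ω
    have hpow : (1 + η * L) ^ τ ≤ 4 := one_add_pow_le_four hc.le
      (le_trans (by gcongr) hEc)
    have hnorm : ‖v τ ω‖ ≤ 4 * ‖gradient f wk‖ :=
      (hgrowth τ hτ ω).trans (mul_le_mul_of_nonneg_right hpow (norm_nonneg _))
    rw [norm_pow, norm_norm]; nlinarith [norm_nonneg (v τ ω), hnorm]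
  calc ∑ τ ∈ Finset.range E, ∫ ω, ‖v τ ω‖ ^ 2 ∂(Measure.pi fun _ : Fin E => μB)
      ≤ ∑ _τ ∈ Finset.range E, 16 * ‖gradient f wk‖ ^ 2 :=
        sum_le_sum fun τ hτ => integral_le_of_norm_le_const (hterm τ (mem_range.mp hτ))
    _ = 16 * (E : ℝ) * ‖gradient f wk‖ ^ 2 := by rw [sum_const, card_range, nsmul_eq_mul]; ring

/-- Lemma "fl-lem-new1".
A single client with an `L`-smooth objective `f` runs the SPIDER-style local-momentum
recursion in a round starting at `wk = w_k`; the batches `B_{k,1},…,B_{k,E−1}` are the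
coordinates of the product probability space `Fin E → Bt`, the stochastic gradients
`G · b` are `L`-Lipschitz and unbiased.  If `η < 1/L` and
`E < (1/4)·min(1/(ηL), 1/(η²L²) − 1/(ηL))`, then
`Σ_{τ=0}^{E−1} E[‖v_{k,τ}‖²] ≤ 16E·‖∇f(w_k)‖²`. -/
theorem stmt7
    {d : ℕ} {Bt : Type*} [MeasurableSpace Bt]
    (μB : Measure Bt) [IsProbabilityMeasure μB]
    (E : ℕ) (hE : 1 ≤ E) (η L : ℝ) (hη : 0 < η) (hL : 0 < L)
    (f : EuclideanSpace ℝ (Fin d) → ℝ)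
    (hdiff : Differentiable ℝ f)
    (hsmooth : ∀ x y, ‖gradient f x - gradient f y‖ ≤ L * ‖x - y‖)
    (G : EuclideanSpace ℝ (Fin d) → Bt → EuclideanSpace ℝ (Fin d))
    (hGlip : ∀ b x y, ‖G x b - G y b‖ ≤ L * ‖x - y‖)
    (hGint : ∀ x, Integrable (G x) μB)
    (hGunb : ∀ x, ∫ b, G x b ∂μB = gradient f x)
    (wk : EuclideanSpace ℝ (Fin d))
    (w v : ℕ → (Fin E → Bt) → EuclideanSpace ℝ (Fin d))
    (hw0 : ∀ ω, w 0 ω = wk)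
    (hv0 : ∀ ω, v 0 ω = gradient f wk)
    (hv : ∀ τ (h1 : 1 ≤ τ) (h2 : τ < E), ∀ ω,
      v τ ω = G (w τ ω) (ω ⟨τ, h2⟩) + v (τ - 1) ω - G (w (τ - 1) ω) (ω ⟨τ, h2⟩))
    (hw : ∀ τ, τ < E → ∀ ω, w (τ + 1) ω = w τ ω - η • v τ ω)
    (hηL : η < 1 / L)
    (hEcond : (E : ℝ) < (1 / 4) * min (1 / (η * L)) (1 / (η ^ 2 * L ^ 2) - 1 / (η * L))) :
    ∑ τ ∈ Finset.range E, ∫ ω, ‖v τ ω‖ ^ 2 ∂(Measure.pi fun _ : Fin E => μB)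
      ≤ 16 * (E : ℝ) * ‖gradient f wk‖ ^ 2 :=
  stmt7_general μB E η L hη hL f G hGlip wk w v hv0 hv hw hEcond
end

section
/- For a single client running the local-momentum (SPIDER-style) recursion with an L-smooth objective f_i, if η < 1/L and E < (1/4)·min(1/(ηL), 1/(η²L²) − 1/(ηL)), then the expected local function decrease over one round is bounded: f_i(w_k) − E[f_i(w_{k,E}^{(i)})] ≤ 4ηE·‖∇f_i(w_k)‖², where the expectation is over the batches B_{k,1}^{(i)},…,B_{k,E−1}^{(i)}. -/
/-! The bound holds for every choice of batches. Lipschitz continuity of the stochastic gradients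
gives `‖v_{τ+1}‖ ≤ (1 + ηL) ‖v_τ‖`, so `‖v_τ‖ ≤ (1 + ηL)^E ‖∇f(w_k)‖ ≤ (4/3) ‖∇f(w_k)‖` because
`EηL ≤ 1/4`, and every iterate stays within `R = (4/3) ηE ‖∇f(w_k)‖` of `w_k`. By `L`-smoothness,
`|f(w_{k,E}) - f(w_k)| ≤ ‖∇f(w_k)‖ R + L R² ≤ 4ηE ‖∇f(w_k)‖²`.

Integrating this needs `f(w_{k,E})` to be a.e. strongly measurable (the Bochner integral of a
non-measurable function is `0`). The batches only enter through `(x, b) ↦ G x b`, which is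
continuous in `x` and, after a change on a null set of batches, jointly measurable. -/

open MeasureTheory

section Caratheodory

open Filter Topology

variable {X β F : Type*} [TopologicalSpace X] [TopologicalSpace.MetrizableSpace X]
  [SecondCountableTopology X] [MeasurableSpace X] [OpensMeasurableSpace X] [MeasurableSpace β]
  {μ : Measure β} [TopologicalSpace F] [TopologicalSpace.PseudoMetrizableSpace F] [Zero F]
  {G : X → β → F}

theorem exists_stronglyMeasurable_uncurry_ae_eq_of_continuous
    (hcont : ∀ b, Continuous fun x => G x b) (hmeas : ∀ x, AEStronglyMeasurable (G x) μ) :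
    ∃ H : X → β → F, StronglyMeasurable (Function.uncurry H) ∧ ∀ᵐ b ∂μ, ∀ x, H x b = G x b := by
  obtain ⟨s, hs, hsd⟩ := TopologicalSpace.exists_countable_dense X
  have hgood : ∀ᵐ b ∂μ, ∀ y ∈ s, G y b = (hmeas y).mk _ b :=
    (ae_ball_iff hs).2 fun y _ => (hmeas y).ae_eq_mk
  obtain ⟨t, hbad, ht, ht0⟩ := exists_measurable_superset_of_null (ae_iff.1 hgood)
  refine ⟨fun x => tᶜ.indicator (G x), ?_, ?_⟩
  · refine stronglyMeasurable_uncurry_of_continuous_of_stronglyMeasurable (fun b => ?_)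
      fun x => ?_
    · by_cases hb : b ∈ t <;> simp [Set.indicator, hb, hcont b, continuous_const]
    -- Off `t`, `G x` is the limit of the measurable versions of `G y`, `y ∈ s`, as `y → x`.
    have := mem_closure_iff_nhdsWithin_neBot.1 (hsd x)
    refine stronglyMeasurable_of_tendsto (𝓝[s] x)
      (fun y => (hmeas y).stronglyMeasurable_mk.indicator ht.compl) (tendsto_pi_nhds.2 fun b => ?_)
    by_cases hb : b ∈ t
    · simpa [hb] using tendsto_const_nhds
    have hbs : ∀ y ∈ s, G y b = (hmeas y).mk _ b := by
      simpa using not_not.1 (mt (@hbad b) hb)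
    simp only [Set.indicator_of_mem (Set.mem_compl hb)]
    exact ((hcont b).continuousWithinAt.tendsto).congr' (eventually_nhdsWithin_of_forall hbs)
  · filter_upwards [measure_eq_zero_iff_ae_notMem.1 ht0] with b hb x
    simp [hb]

theorem aestronglyMeasurable_comp_of_continuous_of_aestronglyMeasurable {Ω : Type*}
    [MeasurableSpace Ω] {ν : Measure Ω}
    (hcont : ∀ b, Continuous fun x => G x b) (hmeas : ∀ x, AEStronglyMeasurable (G x) μ)
    {φ : Ω → X} {ψ : Ω → β} (hφ : AEMeasurable φ ν)
    (hψ : Measure.QuasiMeasurePreserving ψ ν μ) :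
    AEStronglyMeasurable (fun ω => G (φ ω) (ψ ω)) ν := by
  obtain ⟨H, hH, hHG⟩ := exists_stronglyMeasurable_uncurry_ae_eq_of_continuous hcont hmeas
  refine (hH.aestronglyMeasurable.comp_aemeasurable (hφ.prodMk hψ.aemeasurable)).congr ?_
  filter_upwards [hψ.ae hHG] with ω hω using hω (φ ω)

end Caratheodory

theorem aestronglyMeasurable_of_spider_recursion
    {X β : Type*} [NormedAddCommGroup X] [NormedSpace ℝ X] [SecondCountableTopology X]
    [MeasurableSpace X] [BorelSpace X] [MeasurableSpace β] {μ : Measure β} [SigmaFinite μ]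
    {E : ℕ} {η : ℝ} {G : X → β → X}
    (hcont : ∀ b, Continuous fun x => G x b) (hmeas : ∀ x, AEStronglyMeasurable (G x) μ)
    {w v : ℕ → (Fin E → β) → X}
    (hw0 : AEStronglyMeasurable (w 0) (Measure.pi fun _ => μ))
    (hv0 : AEStronglyMeasurable (v 0) (Measure.pi fun _ => μ))
    (hv : ∀ τ (h : τ + 1 < E) ω,
      v (τ + 1) ω = G (w (τ + 1) ω) (ω ⟨τ + 1, h⟩) + v τ ω - G (w τ ω) (ω ⟨τ + 1, h⟩))
    (hw : ∀ τ < E, ∀ ω, w (τ + 1) ω = w τ ω - η • v τ ω) :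
    ∀ τ ≤ E, AEStronglyMeasurable (w τ) (Measure.pi fun _ => μ) ∧
      (τ < E → AEStronglyMeasurable (v τ) (Measure.pi fun _ => μ)) := by
  have hG : ∀ {u : (Fin E → β) → X}, AEStronglyMeasurable u (Measure.pi fun _ => μ) →
      ∀ j : Fin E, AEStronglyMeasurable (fun ω => G (u ω) (ω j)) (Measure.pi fun _ => μ) :=
    fun hu j => aestronglyMeasurable_comp_of_continuous_of_aestronglyMeasurable hcont hmeas
      hu.aemeasurable (Measure.quasiMeasurePreserving_eval _ j)
  intro τ
  induction τ with
  | zero => exact fun _ => ⟨hw0, fun _ => hv0⟩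
  | succ τ ih =>
    intro hτ
    obtain ⟨hwτ, hvτ⟩ := ih (by omega)
    have hwτ' : AEStronglyMeasurable (w (τ + 1)) (Measure.pi fun _ => μ) := by
      rw [funext (hw τ hτ)]
      exact hwτ.sub ((hvτ hτ).const_smul η)
    refine ⟨hwτ', fun h => ?_⟩
    rw [funext (hv τ h)]
    exact ((hG hwτ' _).add (hvτ hτ)).sub (hG hwτ _)

section Recursion

variable {X : Type*} [SeminormedAddCommGroup X] [NormedSpace ℝ X] {E : ℕ} {η L : ℝ}
  {w v : ℕ → X}

theorem norm_le_one_add_mul_pow_mul_of_norm_sub_le (hη : 0 ≤ η) (hL : 0 ≤ L)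
    (hw : ∀ τ < E, w (τ + 1) = w τ - η • v τ)
    (hv : ∀ τ, τ + 1 < E → ‖v (τ + 1) - v τ‖ ≤ L * ‖w (τ + 1) - w τ‖) :
    ∀ τ < E, ‖v τ‖ ≤ (1 + η * L) ^ τ * ‖v 0‖ := by
  intro τ
  induction τ with
  | zero => simp
  | succ τ ih =>
    intro hτ
    have hstep : ‖w (τ + 1) - w τ‖ = η * ‖v τ‖ := by
      rw [hw τ (by omega), sub_sub_cancel_left, norm_neg, norm_smul, Real.norm_of_nonneg hη]
    calc ‖v (τ + 1)‖ ≤ ‖v τ‖ + ‖v (τ + 1) - v τ‖ := norm_le_norm_add_norm_sub' _ _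
      _ ≤ ‖v τ‖ + L * (η * ‖v τ‖) := by rw [← hstep]; gcongr; exact hv τ hτ
      _ = (1 + η * L) * ‖v τ‖ := by ring
      _ ≤ (1 + η * L) * ((1 + η * L) ^ τ * ‖v 0‖) := by gcongr; exact ih (by omega)
      _ = (1 + η * L) ^ (τ + 1) * ‖v 0‖ := by ring

theorem norm_sub_le_mul_one_add_mul_pow_mul_of_norm_sub_le (hη : 0 ≤ η) (hL : 0 ≤ L)
    (hw : ∀ τ < E, w (τ + 1) = w τ - η • v τ)
    (hv : ∀ τ, τ + 1 < E → ‖v (τ + 1) - v τ‖ ≤ L * ‖w (τ + 1) - w τ‖) :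
    ∀ τ ≤ E, ‖w τ - w 0‖ ≤ η * τ * (1 + η * L) ^ τ * ‖v 0‖ := by
  intro τ
  induction τ with
  | zero => simp
  | succ τ ih =>
    intro hτ
    have hvτ := norm_le_one_add_mul_pow_mul_of_norm_sub_le hη hL hw hv τ hτ
    have hgrow : (1 + η * L) ^ τ ≤ (1 + η * L) ^ (τ + 1) :=
      pow_le_pow_right₀ (by nlinarith) τ.le_succ
    calc ‖w (τ + 1) - w 0‖ = ‖(w τ - w 0) - η • v τ‖ := by rw [hw τ hτ, sub_right_comm]
      _ ≤ ‖w τ - w 0‖ + η * ‖v τ‖ :=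
        (norm_sub_le _ _).trans_eq (by rw [norm_smul, Real.norm_of_nonneg hη])
      _ ≤ η * τ * (1 + η * L) ^ τ * ‖v 0‖ + η * ((1 + η * L) ^ τ * ‖v 0‖) := by
        gcongr; exact ih (by omega)
      _ = η * (τ + 1 : ℕ) * (1 + η * L) ^ τ * ‖v 0‖ := by push_cast; ring
      _ ≤ η * (τ + 1 : ℕ) * (1 + η * L) ^ (τ + 1) * ‖v 0‖ := by
        gcongr ?_ * _
        exact mul_le_mul_of_nonneg_left hgrow (by positivity)

end Recursion

section Smooth

variable {F : Type*} [NormedAddCommGroup F] [InnerProductSpace ℝ F] [CompleteSpace F]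
  {f : F → ℝ} {L : ℝ}

theorem abs_sub_sub_inner_gradient_le (hf : Differentiable ℝ f) (hL : 0 ≤ L)
    (hsmooth : ∀ x y, ‖gradient f x - gradient f y‖ ≤ L * ‖x - y‖) (x y : F) :
    |f y - f x - inner ℝ (gradient f x) (y - x)| ≤ L * ‖y - x‖ ^ 2 := by
  have hbound : ∀ z ∈ Metric.closedBall x ‖y - x‖,
      ‖fderiv ℝ f z - fderiv ℝ f x‖ ≤ L * ‖y - x‖ := fun z hz =>
    calc ‖fderiv ℝ f z - fderiv ℝ f x‖ = ‖gradient f z - gradient f x‖ := by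
          rw [gradient, gradient, ← map_sub, LinearIsometryEquiv.norm_map]
      _ ≤ L * ‖z - x‖ := hsmooth z x
      _ ≤ L * ‖y - x‖ := by gcongr; exact mem_closedBall_iff_norm.1 hz
  have := (convex_closedBall x ‖y - x‖).norm_image_sub_le_of_norm_fderiv_le' (fun z _ => hf z)
    hbound (Metric.mem_closedBall_self (norm_nonneg _)) (mem_closedBall_iff_norm.2 le_rfl)
  rwa [gradient, InnerProductSpace.toDual_symm_apply, ← Real.norm_eq_abs, pow_two, ← mul_assoc]

theorem abs_sub_le_norm_gradient_mul_add (hf : Differentiable ℝ f) (hL : 0 ≤ L)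
    (hsmooth : ∀ x y, ‖gradient f x - gradient f y‖ ≤ L * ‖x - y‖) {x y : F} {r : ℝ}
    (hxy : ‖y - x‖ ≤ r) : |f y - f x| ≤ ‖gradient f x‖ * r + L * r ^ 2 := by
  have hinner : |inner ℝ (gradient f x) (y - x)| ≤ ‖gradient f x‖ * r :=
    (abs_real_inner_le_norm _ _).trans (by gcongr)
  have htaylor := abs_sub_sub_inner_gradient_le hf hL hsmooth x y
  have hr : L * ‖y - x‖ ^ 2 ≤ L * r ^ 2 := by gcongr
  linarith [abs_sub_abs_le_abs_sub (f y - f x) (inner ℝ (gradient f x) (y - x))]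

end Smooth

theorem one_add_pow_le_four_thirds {a : ℝ} {n : ℕ} (ha : 0 ≤ a) (hn : n * a ≤ 1 / 4) :
    (1 + a) ^ n ≤ 4 / 3 :=
  calc (1 + a) ^ n ≤ Real.exp a ^ n := by gcongr; linarith [Real.add_one_le_exp a]
    _ = Real.exp (n * a) := (Real.exp_nat_mul a n).symm
    _ ≤ Real.exp (1 / 4) := Real.exp_le_exp.2 hn
    _ ≤ 4 / 3 := by
      convert Real.exp_bound_div_one_sub_of_interval (x := 1 / 4) (by norm_num) (by norm_num)
        using 1
      norm_num

theorem sub_integral_le_of_forall_abs_sub_le {Ω : Type*} [MeasurableSpace Ω] {ν : Measure Ω}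
    [IsProbabilityMeasure ν] {Y : Ω → ℝ} {c C : ℝ} (hY : AEStronglyMeasurable Y ν)
    (h : ∀ ω, |Y ω - c| ≤ C) : c - ∫ ω, Y ω ∂ν ≤ C := by
  have hint : Integrable Y ν := Integrable.of_bound hY (|c| + C) <| ae_of_all _ fun ω => by
    rw [Real.norm_eq_abs]; linarith [abs_sub_abs_le_abs_sub (Y ω) c, h ω]
  have := integral_mono (integrable_const (c - C)) hint fun ω => by linarith [(abs_le.1 (h ω)).1]
  simp only [integral_const, probReal_univ, one_smul] at this
  linarith

theorem stmt8_general
    {d : ℕ} {Bt : Type*} [MeasurableSpace Bt]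
    (μB : Measure Bt) [IsProbabilityMeasure μB]
    (E : ℕ) (η L : ℝ) (hη : 0 < η) (hL : 0 < L)
    (f : EuclideanSpace ℝ (Fin d) → ℝ)
    (hdiff : Differentiable ℝ f)
    (hsmooth : ∀ x y, ‖gradient f x - gradient f y‖ ≤ L * ‖x - y‖)
    (G : EuclideanSpace ℝ (Fin d) → Bt → EuclideanSpace ℝ (Fin d))
    (hGlip : ∀ b x y, ‖G x b - G y b‖ ≤ L * ‖x - y‖)
    (hGint : ∀ x, Integrable (G x) μB)
    (wk : EuclideanSpace ℝ (Fin d))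
    (w v : ℕ → (Fin E → Bt) → EuclideanSpace ℝ (Fin d))
    (hw0 : ∀ ω, w 0 ω = wk)
    (hv0 : ∀ ω, v 0 ω = gradient f wk)
    (hv : ∀ τ (h1 : 1 ≤ τ) (h2 : τ < E), ∀ ω,
      v τ ω = G (w τ ω) (ω ⟨τ, h2⟩) + v (τ - 1) ω - G (w (τ - 1) ω) (ω ⟨τ, h2⟩))
    (hw : ∀ τ, τ < E → ∀ ω, w (τ + 1) ω = w τ ω - η • v τ ω)
    (hEcond : (E : ℝ) < (1 / 4) * min (1 / (η * L)) (1 / (η ^ 2 * L ^ 2) - 1 / (η * L))) :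
    f wk - ∫ ω, f (w E ω) ∂(Measure.pi fun _ : Fin E => μB)
      ≤ 4 * η * (E : ℝ) * ‖gradient f wk‖ ^ 2 := by
  have hv' : ∀ τ (h : τ + 1 < E) ω,
      v (τ + 1) ω = G (w (τ + 1) ω) (ω ⟨τ + 1, h⟩) + v τ ω - G (w τ ω) (ω ⟨τ + 1, h⟩) :=
    fun τ h ω => by simpa using hv (τ + 1) τ.succ_pos' h ω
  have hEa : E * (η * L) ≤ 1 / 4 := by
    have := hEcond.trans_le (mul_le_mul_of_nonneg_left (min_le_left _ _) (by norm_num))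
    rw [mul_one_div, lt_div_iff₀ (mul_pos hη hL)] at this
    exact this.le
  have hdrift : ∀ ω, ‖w E ω - wk‖ ≤ η * E * (4 / 3 * ‖gradient f wk‖) := fun ω => by
    have hincr : ∀ τ, τ + 1 < E → ‖v (τ + 1) ω - v τ ω‖ ≤ L * ‖w (τ + 1) ω - w τ ω‖ :=
      fun τ h => by
        rw [hv' τ h ω, add_sub_right_comm, add_sub_cancel_right]
        exact hGlip _ _ _
    have hgrowth := one_add_pow_le_four_thirds (mul_pos hη hL).le hEa
    calc ‖w E ω - wk‖ ≤ η * E * (1 + η * L) ^ E * ‖gradient f wk‖ := by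
          simpa [hw0, hv0] using norm_sub_le_mul_one_add_mul_pow_mul_of_norm_sub_le
            (w := (w · ω)) (v := (v · ω)) hη.le hL.le (fun τ h => hw τ h ω) hincr E le_rfl
      _ ≤ η * E * (4 / 3 * ‖gradient f wk‖) := by rw [mul_assoc]; gcongr
  have hGcont : ∀ b, Continuous fun x => G x b := fun b =>
    (LipschitzWith.of_dist_le_mul (K := L.toNNReal) fun x y => by
      simpa [dist_eq_norm, Real.coe_toNNReal _ hL.le] using hGlip b x y).continuous
  have hwE := (aestronglyMeasurable_of_spider_recursion hGcont
    (fun x => (hGint x).aestronglyMeasurable)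
    (by rw [funext hw0]; exact aestronglyMeasurable_const)
    (by rw [funext hv0]; exact aestronglyMeasurable_const) hv' hw E le_rfl).1
  refine sub_integral_le_of_forall_abs_sub_le (hdiff.continuous.comp_aestronglyMeasurable hwE)
    fun ω => (abs_sub_le_norm_gradient_mul_add hdiff hL.le hsmooth (hdrift ω)).trans ?_
  have := mul_le_mul_of_nonneg_left hEa (by positivity : 0 ≤ η * E * ‖gradient f wk‖ ^ 2)
  nlinarith

/-- Lemma "fl-lem3".
A single client with an `L`-smooth objective `f` runs the SPIDER-style local-momentum
recursion in a round starting at `wk = w_k`; the batches `B_{k,1},…,B_{k,E−1}` are the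
coordinates of the product probability space `Fin E → Bt`, the stochastic gradients
`G · b` are `L`-Lipschitz and unbiased.  If `η < 1/L` and
`E < (1/4)·min(1/(ηL), 1/(η²L²) − 1/(ηL))`, then the expected local decrease over one
round satisfies `f(w_k) − E[f(w_{k,E})] ≤ 4ηE·‖∇f(w_k)‖²`. -/
theorem stmt8
    {d : ℕ} {Bt : Type*} [MeasurableSpace Bt]
    (μB : Measure Bt) [IsProbabilityMeasure μB]
    (E : ℕ) (hE : 1 ≤ E) (η L : ℝ) (hη : 0 < η) (hL : 0 < L)
    (f : EuclideanSpace ℝ (Fin d) → ℝ)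
    (hdiff : Differentiable ℝ f)
    (hsmooth : ∀ x y, ‖gradient f x - gradient f y‖ ≤ L * ‖x - y‖)
    (G : EuclideanSpace ℝ (Fin d) → Bt → EuclideanSpace ℝ (Fin d))
    (hGlip : ∀ b x y, ‖G x b - G y b‖ ≤ L * ‖x - y‖)
    (hGint : ∀ x, Integrable (G x) μB)
    (hGunb : ∀ x, ∫ b, G x b ∂μB = gradient f x)
    (wk : EuclideanSpace ℝ (Fin d))
    (w v : ℕ → (Fin E → Bt) → EuclideanSpace ℝ (Fin d))
    (hw0 : ∀ ω, w 0 ω = wk)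
    (hv0 : ∀ ω, v 0 ω = gradient f wk)
    (hv : ∀ τ (h1 : 1 ≤ τ) (h2 : τ < E), ∀ ω,
      v τ ω = G (w τ ω) (ω ⟨τ, h2⟩) + v (τ - 1) ω - G (w (τ - 1) ω) (ω ⟨τ, h2⟩))
    (hw : ∀ τ, τ < E → ∀ ω, w (τ + 1) ω = w τ ω - η • v τ ω)
    (hηL : η < 1 / L)
    (hEcond : (E : ℝ) < (1 / 4) * min (1 / (η * L)) (1 / (η ^ 2 * L ^ 2) - 1 / (η * L))) :
    f wk - ∫ ω, f (w E ω) ∂(Measure.pi fun _ : Fin E => μB)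
      ≤ 4 * η * (E : ℝ) * ‖gradient f wk‖ ^ 2 :=
  stmt8_general μB E η L hη hL f hdiff hsmooth G hGlip hGint wk w v hw0 hv0 hv hw hEcond
end

section
/- For a single client running the local-momentum (SPIDER-style) recursion with an L-smooth objective f_i, if η < 1/L and E < (1/4)·min(1/(ηL), 1/(η²L²) − 1/(ηL)), then the accumulated gradient-estimation error satisfies Σ_{τ=0}^{E−1} E[‖e_{k,τ}^{(i)}‖²] ≤ 32E²η²L²·‖∇f_i(w_k)‖², where e_{k,τ}^{(i)} = v_{k,τ}^{(i)} − ∇f_i(w_{k,τ}^{(i)}) and the expectation is over the batches B_{k,1}^{(i)},…,B_{k,E−1}^{(i)}. -/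
/-
The error `e τ = v τ - ∇f(w τ)` starts at `0` and at step `τ + 1` receives the increment
`ξ = (G(w (τ+1)) - G(w τ)) - (∇f(w (τ+1)) - ∇f(w τ))` evaluated at the fresh batch. Given the
earlier batches, `ξ` has mean zero (unbiasedness) and norm at most `2ηL‖v τ‖`, so by Pythagoras
`E‖e (τ+1)‖² ≤ E‖e τ‖² + (2ηL sup‖v τ‖)²`. Since `e τ` is at most `2ηL ∑_{s<τ} ‖v s‖` and
`∇f(w τ)` moves by at most `ηL ∑_{s<τ} ‖v s‖`, the condition `4ηLE ≤ 1` keeps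
`‖v τ‖ ≤ 4‖∇f(w_k)‖` pointwise. Hence `E‖e τ‖² ≤ 64 τ η²L²‖∇f(w_k)‖²`, and summing over `τ < E`
gives the bound. Fubini is available because `G`, Lipschitz in `x` and a.e.-measurable in the
batch, has a jointly measurable version.
-/

open MeasureTheory Finset Filter
open scoped RealInnerProductSpace

theorem aestronglyMeasurable_comp_of_continuous_of_aestronglyMeasurable_s9
    {Ω X B Y : Type*} [MeasurableSpace Ω] [MeasurableSpace B]
    [TopologicalSpace X] [TopologicalSpace.MetrizableSpace X]
    [SecondCountableTopology X] [MeasurableSpace X] [OpensMeasurableSpace X]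
    [TopologicalSpace Y] [TopologicalSpace.PseudoMetrizableSpace Y] [Zero Y]
    {μ : Measure Ω} {ν : Measure B} {G : X → B → Y}
    (hGc : ∀ b, Continuous (G · b)) (hGm : ∀ x, AEStronglyMeasurable (G x) ν)
    {u : Ω → X} (hu : AEMeasurable u μ) {π : Ω → B}
    (hπ : Measure.QuasiMeasurePreserving π μ ν) :
    AEStronglyMeasurable (fun ω => G (u ω) (π ω)) μ := by
  -- Off a `ν`-null set, `G x` agrees with a measurable version for all `x` in a countable dense
  -- set, hence (by continuity in `x`) is a limit of measurable functions for every `x`.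
  obtain ⟨s, hs, hsd⟩ := TopologicalSpace.exists_countable_dense X
  set N := toMeasurable ν (⋃ x ∈ s, {b | G x b ≠ (hGm x).mk (G x) b})
  have hN : ν N = 0 := by
    rw [measure_toMeasurable, measure_biUnion_null_iff hs]
    exact fun x _ => (hGm x).ae_eq_mk
  have hNm : MeasurableSet N := measurableSet_toMeasurable _ _
  set G' : X → B → Y := fun x => Nᶜ.indicator (G x)
  have hG'c : ∀ b, Continuous (G' · b) := by
    intro b
    by_cases hb : b ∈ N
    · simpa [G', hb] using continuous_const
    · simpa [G', hb] using hGc b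
  have hG's : ∀ x ∈ s, StronglyMeasurable (G' x) := by
    intro x hx
    convert (hGm x).stronglyMeasurable_mk.indicator hNm.compl using 1
    ext b
    by_cases hb : b ∈ N
    · simp [G', hb]
    · have : b ∉ ⋃ x ∈ s, {b | G x b ≠ (hGm x).mk (G x) b} :=
        fun h => hb (subset_toMeasurable _ _ h)
      simp only [Set.mem_iUnion, Set.mem_ofPred_eq, not_exists, not_not] at this
      simp [G', hb, this x hx]
  have hG'm : ∀ x, StronglyMeasurable (G' x) := by
    intro x
    obtain ⟨xs, hxs, hlim⟩ := mem_closure_iff_seq_limit.1 (hsd x)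
    exact stronglyMeasurable_of_tendsto atTop (fun k => hG's _ (hxs k))
      (tendsto_pi_nhds.2 fun b => ((hG'c b).tendsto x).comp hlim)
  have hjoint := stronglyMeasurable_uncurry_of_continuous_of_stronglyMeasurable hG'c hG'm
  refine (hjoint.comp_measurable (hu.measurable_mk.prodMk hπ.measurable)).aestronglyMeasurable.congr
    ?_
  filter_upwards [hu.ae_eq_mk, hπ.ae (measure_eq_zero_iff_ae_notMem.1 hN)] with ω hωu hωN
  simp [G', hωu, hωN]

theorem integral_apply_eq_zero_of_update {B V : Type*} [MeasurableSpace B]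
    [NormedAddCommGroup V] [NormedSpace ℝ V] {ν : Measure B} [IsProbabilityMeasure ν]
    {E : ℕ} (i : Fin E) {Φ : (Fin E → B) → B → V}
    (hΦ : ∀ ω b, Φ (Function.update ω i b) = Φ ω) (h0 : ∀ ω, ∫ b, Φ ω b ∂ν = 0)
    (hint : Integrable (fun ω => Φ ω (ω i)) (Measure.pi fun _ => ν)) :
    ∫ ω, Φ ω (ω i) ∂(Measure.pi fun _ => ν) = 0 := by
  cases E with
  | zero => exact i.elim0
  | succ n =>
    obtain ⟨b₀⟩ := nonempty_of_isProbabilityMeasure ν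
    set T := MeasurableEquiv.piFinSuccAbove (fun _ : Fin (n + 1) => B) i
    have hT : MeasurePreserving T.symm (ν.prod (Measure.pi fun _ => ν)) (Measure.pi fun _ => ν) :=
      (measurePreserving_piFinSuccAbove (fun _ => ν) i).symm T
    have hslice : ∀ y b, Φ (T.symm (b, y)) (T.symm (b, y) i) = Φ (i.insertNth b₀ y) b := by
      intro y b
      have hTy : T.symm (b, y) = i.insertNth b y := rfl
      rw [hTy, Fin.insertNth_apply_same, ← Fin.update_insertNth (α := fun _ => B) i b₀ b y, hΦ]
    rw [← hT.integral_comp' (fun ω => Φ ω (ω i)),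
      integral_prod_symm (fun p => Φ (T.symm p) (T.symm p i))
        ((hT.integrable_comp_emb T.symm.measurableEmbedding).2 hint)]
    simp [hslice, h0]

theorem continuous_of_norm_sub_le {X Y : Type*} [SeminormedAddCommGroup X]
    [SeminormedAddCommGroup Y] {φ : X → Y} {L : ℝ} (h : ∀ x y, ‖φ x - φ y‖ ≤ L * ‖x - y‖) :
    Continuous φ :=
  (LipschitzWith.of_dist_le' fun x y => by simpa only [dist_eq_norm] using h x y).continuous

section Hilbert

variable {Ω H : Type*} [MeasurableSpace Ω] {μ : Measure Ω}
  [NormedAddCommGroup H] [InnerProductSpace ℝ H] {X Y : Ω → H} {C c : ℝ}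

theorem integrable_inner_of_norm_le [IsFiniteMeasure μ] (hX : AEStronglyMeasurable X μ)
    (hY : AEStronglyMeasurable Y μ) (hXC : ∀ ω, ‖X ω‖ ≤ C) (hYc : ∀ ω, ‖Y ω‖ ≤ c) :
    Integrable (fun ω => ⟪X ω, Y ω⟫) μ := by
  refine .of_bound (hX.inner hY) (C * c) (.of_forall fun ω => ?_)
  rw [Real.norm_eq_abs]
  exact (abs_real_inner_le_norm _ _).trans
    (mul_le_mul (hXC ω) (hYc ω) (norm_nonneg _) ((norm_nonneg _).trans (hXC ω)))

theorem integral_norm_add_sq_le [IsProbabilityMeasure μ] (hX : AEStronglyMeasurable X μ)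
    (hY : AEStronglyMeasurable Y μ) (hXC : ∀ ω, ‖X ω‖ ≤ C) (hYc : ∀ ω, ‖Y ω‖ ≤ c)
    (horth : ∫ ω, ⟪X ω, Y ω⟫ ∂μ = 0) :
    ∫ ω, ‖X ω + Y ω‖ ^ 2 ∂μ ≤ ∫ ω, ‖X ω‖ ^ 2 ∂μ + c ^ 2 := by
  have hsq : ∀ {Z : Ω → H} {K : ℝ}, AEStronglyMeasurable Z μ → (∀ ω, ‖Z ω‖ ≤ K) →
      Integrable (fun ω => ‖Z ω‖ ^ 2) μ := fun hZ hZK =>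
    (integrable_inner_of_norm_le hZ hZ hZK hZK).congr
      (.of_forall fun ω => real_inner_self_eq_norm_sq _)
  have hY2 : ∫ ω, ‖Y ω‖ ^ 2 ∂μ ≤ c ^ 2 := by
    refine (integral_mono (hsq hY hYc) (integrable_const (c ^ 2)) fun ω => ?_).trans (by simp)
    exact pow_le_pow_left₀ (norm_nonneg _) (hYc ω) 2
  have hXY := (integrable_inner_of_norm_le hX hY hXC hYc).const_mul 2
  simp only [norm_add_sq_real]
  rw [integral_add ((hsq hX hXC).fun_add hXY) (hsq hY hYc), integral_add (hsq hX hXC) hXY,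
    integral_const_mul, horth]
  linarith

end Hilbert

section LocalMomentum

variable {H B : Type*} [NormedAddCommGroup H] {G : H → B → H} {F : H → H} {L η : ℝ}

def gradDiffNoise (G : H → B → H) (F : H → H) (x y : H) (b : B) : H :=
  (G y b - G x b) - (F y - F x)

theorem norm_gradDiffNoise_le (hG : ∀ b x y, ‖G x b - G y b‖ ≤ L * ‖x - y‖)
    (hF : ∀ x y, ‖F x - F y‖ ≤ L * ‖x - y‖) (x y : H) (b : B) :
    ‖gradDiffNoise G F x y b‖ ≤ 2 * L * ‖y - x‖ :=
  calc ‖gradDiffNoise G F x y b‖ ≤ ‖G y b - G x b‖ + ‖F y - F x‖ := norm_sub_le _ _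
    _ ≤ L * ‖y - x‖ + L * ‖y - x‖ := add_le_add (hG b y x) (hF y x)
    _ = 2 * L * ‖y - x‖ := by ring

theorem integrable_gradDiffNoise [MeasurableSpace B] {ν : Measure B} [IsFiniteMeasure ν]
    (hGint : ∀ x, Integrable (G x) ν) (x y : H) : Integrable (gradDiffNoise G F x y) ν :=
  ((hGint y).sub' (hGint x)).sub' (integrable_const _)

variable [NormedSpace ℝ H]

theorem integral_gradDiffNoise [MeasurableSpace B] {ν : Measure B} [IsProbabilityMeasure ν]
    [CompleteSpace H] (hGint : ∀ x, Integrable (G x) ν)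
    (hGunb : ∀ x, ∫ b, G x b ∂ν = F x) (x y : H) : ∫ b, gradDiffNoise G F x y b ∂ν = 0 := by
  simp only [gradDiffNoise]
  rw [integral_sub ((hGint y).sub' (hGint x)) (integrable_const _),
    integral_sub (hGint y) (hGint x), hGunb, hGunb, integral_const]
  simp

/-- One round of the local-momentum recursion: `F` stands for `∇f_i`, `G · b` for the stochastic
gradient on batch `b`, and `ω τ` for the batch `B_{k,τ}` (the coordinate `ω 0` is unused). -/
structure IsLocalMomentumRun (E : ℕ) (η : ℝ) (G : H → B → H) (F : H → H) (wk : H)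
    (w v : ℕ → (Fin E → B) → H) : Prop where
  w_zero : ∀ ω, w 0 ω = wk
  v_zero : ∀ ω, v 0 ω = F wk
  v_rec : ∀ τ, 1 ≤ τ → ∀ (h : τ < E), ∀ ω,
    v τ ω = G (w τ ω) (ω ⟨τ, h⟩) + v (τ - 1) ω - G (w (τ - 1) ω) (ω ⟨τ, h⟩)
  w_succ : ∀ τ, τ < E → ∀ ω, w (τ + 1) ω = w τ ω - η • v τ ω

namespace IsLocalMomentumRun

variable {E : ℕ} {wk : H} {w v : ℕ → (Fin E → B) → H}

theorem v_succ (run : IsLocalMomentumRun E η G F wk w v) {τ : ℕ} (h : τ + 1 < E)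
    (ω : Fin E → B) :
    v (τ + 1) ω = G (w (τ + 1) ω) (ω ⟨τ + 1, h⟩) + v τ ω - G (w τ ω) (ω ⟨τ + 1, h⟩) := by
  simpa using run.v_rec (τ + 1) le_add_self h ω

theorem error_zero (run : IsLocalMomentumRun E η G F wk w v) (ω : Fin E → B) :
    v 0 ω - F (w 0 ω) = 0 := by
  rw [run.v_zero, run.w_zero, sub_self]

theorem error_succ (run : IsLocalMomentumRun E η G F wk w v) {τ : ℕ} (h : τ + 1 < E)
    (ω : Fin E → B) :
    v (τ + 1) ω - F (w (τ + 1) ω) =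
      (v τ ω - F (w τ ω)) + gradDiffNoise G F (w τ ω) (w (τ + 1) ω) (ω ⟨τ + 1, h⟩) := by
  rw [run.v_succ h, gradDiffNoise]
  abel

theorem norm_w_succ_sub (run : IsLocalMomentumRun E η G F wk w v) (hη : 0 ≤ η) {τ : ℕ}
    (h : τ < E) (ω : Fin E → B) : ‖w (τ + 1) ω - w τ ω‖ = η * ‖v τ ω‖ := by
  rw [run.w_succ τ h, sub_sub_cancel_left, norm_neg, norm_smul, Real.norm_of_nonneg hη]

theorem w_eq_sub_sum (run : IsLocalMomentumRun E η G F wk w v) {τ : ℕ} (h : τ ≤ E)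
    (ω : Fin E → B) : w τ ω = wk - η • ∑ s ∈ range τ, v s ω := by
  induction τ with
  | zero => simp [run.w_zero]
  | succ τ ih => rw [run.w_succ τ h, ih (by omega), sum_range_succ, smul_add, sub_sub]

theorem norm_gradDiffNoise_step_le (run : IsLocalMomentumRun E η G F wk w v)
    (hG : ∀ b x y, ‖G x b - G y b‖ ≤ L * ‖x - y‖) (hF : ∀ x y, ‖F x - F y‖ ≤ L * ‖x - y‖)
    (hη : 0 ≤ η) {τ : ℕ} (h : τ < E) (ω : Fin E → B) (b : B) :
    ‖gradDiffNoise G F (w τ ω) (w (τ + 1) ω) b‖ ≤ 2 * (η * L) * ‖v τ ω‖ := by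
  have := norm_gradDiffNoise_le hG hF (w τ ω) (w (τ + 1) ω) b
  rw [run.norm_w_succ_sub hη h] at this
  linarith

theorem norm_error_le (run : IsLocalMomentumRun E η G F wk w v)
    (hG : ∀ b x y, ‖G x b - G y b‖ ≤ L * ‖x - y‖) (hF : ∀ x y, ‖F x - F y‖ ≤ L * ‖x - y‖)
    (hη : 0 ≤ η) {τ : ℕ} (h : τ < E) (ω : Fin E → B) :
    ‖v τ ω - F (w τ ω)‖ ≤ 2 * (η * L) * ∑ s ∈ range τ, ‖v s ω‖ := by
  induction τ with
  | zero => simp [run.error_zero]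
  | succ τ ih =>
    rw [run.error_succ h, sum_range_succ, mul_add]
    exact (norm_add_le _ _).trans (add_le_add (ih (by omega))
      (run.norm_gradDiffNoise_step_le hG hF hη (by omega) ω _))

/-- By `norm_error_le` and the smoothness of `F`, `‖v τ‖ ≤ ‖F wk‖ + 3ηL ∑_{s<τ} ‖v s‖`, and
`3ηL · τ · 4 ≤ 3` closes the strong induction. -/
theorem norm_v_le (run : IsLocalMomentumRun E η G F wk w v)
    (hG : ∀ b x y, ‖G x b - G y b‖ ≤ L * ‖x - y‖) (hF : ∀ x y, ‖F x - F y‖ ≤ L * ‖x - y‖)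
    (hη : 0 ≤ η) (hL : 0 ≤ L) (hE : 4 * (η * L) * E ≤ 1) {τ : ℕ} (h : τ < E)
    (ω : Fin E → B) : ‖v τ ω‖ ≤ 4 * ‖F wk‖ := by
  induction τ using Nat.strong_induction_on with
  | _ τ ih =>
    set S := ∑ s ∈ range τ, ‖v s ω‖
    have hS : S ≤ τ * (4 * ‖F wk‖) := by
      simpa using sum_le_sum fun s hs => ih s (mem_range.1 hs) (by simp at hs; omega)
    have hw : ‖w τ ω - wk‖ ≤ η * S := by
      rw [run.w_eq_sub_sum h.le, sub_sub_cancel_left, norm_neg, norm_smul,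
        Real.norm_of_nonneg hη]
      exact mul_le_mul_of_nonneg_left (norm_sum_le _ _) hη
    have hgrad : ‖F (w τ ω)‖ ≤ ‖F wk‖ + η * L * S := by
      have := (norm_le_norm_add_norm_sub' (F (w τ ω)) (F wk)).trans
        (add_le_add_right ((hF _ _).trans (mul_le_mul_of_nonneg_left hw hL)) _)
      linarith
    have hτ : η * L * τ ≤ 1 / 4 := by
      have : (τ : ℝ) ≤ E := by exact_mod_cast h.le
      nlinarith [mul_nonneg hη hL]
    calc ‖v τ ω‖ ≤ ‖v τ ω - F (w τ ω)‖ + ‖F (w τ ω)‖ := norm_le_norm_sub_add _ _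
      _ ≤ 2 * (η * L) * S + (‖F wk‖ + η * L * S) :=
          add_le_add (run.norm_error_le hG hF hη h ω) hgrad
      _ = ‖F wk‖ + 3 * (η * L) * S := by ring
      _ ≤ ‖F wk‖ + 3 * (η * L) * (τ * (4 * ‖F wk‖)) := by gcongr
      _ ≤ 4 * ‖F wk‖ := by nlinarith [norm_nonneg (F wk)]

theorem norm_error_le_of_step_size (run : IsLocalMomentumRun E η G F wk w v)
    (hG : ∀ b x y, ‖G x b - G y b‖ ≤ L * ‖x - y‖) (hF : ∀ x y, ‖F x - F y‖ ≤ L * ‖x - y‖)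
    (hη : 0 ≤ η) (hL : 0 ≤ L) (hE : 4 * (η * L) * E ≤ 1) {τ : ℕ} (h : τ < E)
    (ω : Fin E → B) : ‖v τ ω - F (w τ ω)‖ ≤ 8 * (η * L) * τ * ‖F wk‖ := by
  have hS : ∑ s ∈ range τ, ‖v s ω‖ ≤ τ * (4 * ‖F wk‖) := by
    simpa using sum_le_sum fun s hs =>
      run.norm_v_le hG hF hη hL hE ((mem_range.1 hs).trans h) ω
  calc ‖v τ ω - F (w τ ω)‖ ≤ 2 * (η * L) * ∑ s ∈ range τ, ‖v s ω‖ :=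
        run.norm_error_le hG hF hη h ω
    _ ≤ 2 * (η * L) * (τ * (4 * ‖F wk‖)) := by gcongr
    _ = 8 * (η * L) * τ * ‖F wk‖ := by ring

theorem apply_update_of_lt (run : IsLocalMomentumRun E η G F wk w v) {τ : ℕ} (h : τ < E)
    (j : Fin E) (hj : τ < j) (ω : Fin E → B) (b : B) :
    w τ (Function.update ω j b) = w τ ω ∧ v τ (Function.update ω j b) = v τ ω := by
  induction τ with
  | zero => simp [run.w_zero, run.v_zero]
  | succ τ ih =>
    obtain ⟨hwτ, hvτ⟩ := ih (by omega) (by omega)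
    have hw' : w (τ + 1) (Function.update ω j b) = w (τ + 1) ω := by
      rw [run.w_succ τ (by omega), run.w_succ τ (by omega), hwτ, hvτ]
    have hne : (⟨τ + 1, h⟩ : Fin E) ≠ j := Fin.ne_of_lt hj
    refine ⟨hw', ?_⟩
    rw [run.v_succ h, run.v_succ h, hw', hwτ, hvτ, Function.update_of_ne hne]

variable [MeasurableSpace H] [BorelSpace H] [SecondCountableTopology H]
  [MeasurableSpace B] {ν : Measure B} [IsProbabilityMeasure ν]

theorem aestronglyMeasurable (run : IsLocalMomentumRun E η G F wk w v)
    (hGc : ∀ b, Continuous (G · b)) (hGm : ∀ x, AEStronglyMeasurable (G x) ν) {τ : ℕ}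
    (h : τ < E) :
    AEStronglyMeasurable (w τ) (Measure.pi fun _ => ν) ∧
      AEStronglyMeasurable (v τ) (Measure.pi fun _ => ν) := by
  have hG : ∀ {u : (Fin E → B) → H}, AEStronglyMeasurable u (Measure.pi fun _ => ν) →
      ∀ i, AEStronglyMeasurable (fun ω => G (u ω) (ω i)) (Measure.pi fun _ => ν) :=
    fun hu i => aestronglyMeasurable_comp_of_continuous_of_aestronglyMeasurable_s9 hGc hGm
      hu.aemeasurable (measurePreserving_eval _ i).quasiMeasurePreserving
  induction τ with
  | zero =>
    simp only [funext run.w_zero, funext run.v_zero]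
    exact ⟨aestronglyMeasurable_const, aestronglyMeasurable_const⟩
  | succ τ ih =>
    obtain ⟨hwτ, hvτ⟩ := ih (by omega)
    have hw' : AEStronglyMeasurable (w (τ + 1)) (Measure.pi fun _ => ν) := by
      rw [funext (run.w_succ τ (by omega))]
      exact hwτ.sub (hvτ.const_smul η)
    refine ⟨hw', ?_⟩
    rw [funext (run.v_succ h)]
    exact ((hG hw' _).add hvτ).sub (hG hwτ _)

theorem aestronglyMeasurable_error (run : IsLocalMomentumRun E η G F wk w v)
    (hGc : ∀ b, Continuous (G · b)) (hGm : ∀ x, AEStronglyMeasurable (G x) ν)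
    (hFc : Continuous F) {τ : ℕ} (h : τ < E) :
    AEStronglyMeasurable (fun ω => v τ ω - F (w τ ω)) (Measure.pi fun _ => ν) :=
  (run.aestronglyMeasurable hGc hGm h).2.sub
    (hFc.comp_aestronglyMeasurable (run.aestronglyMeasurable hGc hGm h).1)

theorem aestronglyMeasurable_gradDiffNoise (run : IsLocalMomentumRun E η G F wk w v)
    (hGc : ∀ b, Continuous (G · b)) (hGm : ∀ x, AEStronglyMeasurable (G x) ν)
    (hFc : Continuous F) {τ : ℕ} (h : τ + 1 < E) :
    AEStronglyMeasurable (fun ω => gradDiffNoise G F (w τ ω) (w (τ + 1) ω) (ω ⟨τ + 1, h⟩))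
      (Measure.pi fun _ => ν) :=
  aestronglyMeasurable_comp_of_continuous_of_aestronglyMeasurable_s9
    (G := fun p b => gradDiffNoise G F p.1 p.2 b)
    (fun b => (((hGc b).comp continuous_snd).sub ((hGc b).comp continuous_fst)).sub
      ((hFc.comp continuous_snd).sub (hFc.comp continuous_fst)))
    (fun p => by exact ((hGm p.2).sub (hGm p.1)).sub aestronglyMeasurable_const)
    ((run.aestronglyMeasurable hGc hGm (τ := τ) (by omega)).1.aemeasurable.prodMk
      (run.aestronglyMeasurable hGc hGm h).1.aemeasurable)
    (measurePreserving_eval _ _).quasiMeasurePreserving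

end IsLocalMomentumRun

end LocalMomentum

namespace IsLocalMomentumRun

variable {H B : Type*} [NormedAddCommGroup H] [InnerProductSpace ℝ H] [CompleteSpace H]
  [MeasurableSpace H] [BorelSpace H] [SecondCountableTopology H]
  [MeasurableSpace B] {ν : Measure B} [IsProbabilityMeasure ν]
  {G : H → B → H} {F : H → H} {L η : ℝ} {E : ℕ} {wk : H} {w v : ℕ → (Fin E → B) → H}

/-- The gradient noise added at step `τ + 1` has mean zero given the batches up to `τ`, so the
expected squared error grows by at most the squared size of that noise. -/
theorem integral_norm_error_succ_sq_le (run : IsLocalMomentumRun E η G F wk w v)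
    (hG : ∀ b x y, ‖G x b - G y b‖ ≤ L * ‖x - y‖) (hGint : ∀ x, Integrable (G x) ν)
    (hGunb : ∀ x, ∫ b, G x b ∂ν = F x) (hF : ∀ x y, ‖F x - F y‖ ≤ L * ‖x - y‖)
    (hη : 0 ≤ η) (hL : 0 ≤ L) (hE : 4 * (η * L) * E ≤ 1) {τ : ℕ} (h : τ + 1 < E) :
    ∫ ω, ‖v (τ + 1) ω - F (w (τ + 1) ω)‖ ^ 2 ∂(Measure.pi fun _ => ν) ≤
      ∫ ω, ‖v τ ω - F (w τ ω)‖ ^ 2 ∂(Measure.pi fun _ => ν) + (8 * (η * L) * ‖F wk‖) ^ 2 := by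
  set i : Fin E := ⟨τ + 1, h⟩
  have hGc : ∀ b, Continuous (G · b) := fun b => continuous_of_norm_sub_le (hG b)
  have hFc := continuous_of_norm_sub_le hF
  have hGm : ∀ x, AEStronglyMeasurable (G x) ν := fun x => (hGint x).1
  have hX := run.aestronglyMeasurable_error hGc hGm hFc (τ := τ) (by omega)
  have hY := run.aestronglyMeasurable_gradDiffNoise hGc hGm hFc h
  have hXC := run.norm_error_le_of_step_size hG hF hη hL hE (τ := τ) (by omega)
  have hYc : ∀ ω, ‖gradDiffNoise G F (w τ ω) (w (τ + 1) ω) (ω i)‖ ≤ 8 * (η * L) * ‖F wk‖ :=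
    fun ω => (run.norm_gradDiffNoise_step_le hG hF hη (by omega) ω _).trans (by
      have := run.norm_v_le hG hF hη hL hE (τ := τ) (by omega) ω
      nlinarith [mul_nonneg hη hL])
  have horth : ∫ ω, ⟪v τ ω - F (w τ ω), gradDiffNoise G F (w τ ω) (w (τ + 1) ω) (ω i)⟫
      ∂(Measure.pi fun _ => ν) = 0 := by
    refine integral_apply_eq_zero_of_update i
      (Φ := fun ω b => ⟪v τ ω - F (w τ ω), gradDiffNoise G F (w τ ω) (w (τ + 1) ω) b⟫)
      (fun ω b => ?_) (fun ω => ?_) (integrable_inner_of_norm_le hX hY hXC hYc)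
    · obtain ⟨hw, hv⟩ := run.apply_update_of_lt (τ := τ) (by omega) i (by simp [i]) ω b
      simp only [run.w_succ τ (by omega), hw, hv]
    · rw [integral_inner (integrable_gradDiffNoise hGint _ _),
        integral_gradDiffNoise hGint hGunb, inner_zero_right]
  simp only [run.error_succ h]
  exact integral_norm_add_sq_le hX hY hXC hYc horth

theorem integral_norm_error_sq_le (run : IsLocalMomentumRun E η G F wk w v)
    (hG : ∀ b x y, ‖G x b - G y b‖ ≤ L * ‖x - y‖) (hGint : ∀ x, Integrable (G x) ν)
    (hGunb : ∀ x, ∫ b, G x b ∂ν = F x) (hF : ∀ x y, ‖F x - F y‖ ≤ L * ‖x - y‖)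
    (hη : 0 ≤ η) (hL : 0 ≤ L) (hE : 4 * (η * L) * E ≤ 1) {τ : ℕ} (h : τ < E) :
    ∫ ω, ‖v τ ω - F (w τ ω)‖ ^ 2 ∂(Measure.pi fun _ => ν) ≤
      τ * (8 * (η * L) * ‖F wk‖) ^ 2 := by
  induction τ with
  | zero => simp [run.error_zero]
  | succ τ ih =>
    have := run.integral_norm_error_succ_sq_le hG hGint hGunb hF hη hL hE h
    push_cast
    linarith [ih (by omega)]

end IsLocalMomentumRun

theorem sum_range_natCast_le (n : ℕ) : ∑ τ ∈ range n, (τ : ℝ) ≤ n ^ 2 / 2 := by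
  induction n with
  | zero => simp
  | succ n ih =>
    rw [sum_range_succ]
    push_cast
    nlinarith

theorem stmt9_general
    {d : ℕ} {Bt : Type*} [MeasurableSpace Bt]
    (μB : Measure Bt) [IsProbabilityMeasure μB]
    (E : ℕ) (η L : ℝ) (hη : 0 < η) (hL : 0 < L)
    (f : EuclideanSpace ℝ (Fin d) → ℝ)
    (hsmooth : ∀ x y, ‖gradient f x - gradient f y‖ ≤ L * ‖x - y‖)
    (G : EuclideanSpace ℝ (Fin d) → Bt → EuclideanSpace ℝ (Fin d))
    (hGlip : ∀ b x y, ‖G x b - G y b‖ ≤ L * ‖x - y‖)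
    (hGint : ∀ x, Integrable (G x) μB)
    (hGunb : ∀ x, ∫ b, G x b ∂μB = gradient f x)
    (wk : EuclideanSpace ℝ (Fin d))
    (w v : ℕ → (Fin E → Bt) → EuclideanSpace ℝ (Fin d))
    (hw0 : ∀ ω, w 0 ω = wk)
    (hv0 : ∀ ω, v 0 ω = gradient f wk)
    (hv : ∀ τ (h1 : 1 ≤ τ) (h2 : τ < E), ∀ ω,
      v τ ω = G (w τ ω) (ω ⟨τ, h2⟩) + v (τ - 1) ω - G (w (τ - 1) ω) (ω ⟨τ, h2⟩))
    (hw : ∀ τ, τ < E → ∀ ω, w (τ + 1) ω = w τ ω - η • v τ ω)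
    (hEcond : (E : ℝ) < (1 / 4) * min (1 / (η * L)) (1 / (η ^ 2 * L ^ 2) - 1 / (η * L))) :
    ∑ τ ∈ Finset.range E,
        ∫ ω, ‖v τ ω - gradient f (w τ ω)‖ ^ 2 ∂(Measure.pi fun _ : Fin E => μB)
      ≤ 32 * (E : ℝ) ^ 2 * η ^ 2 * L ^ 2 * ‖gradient f wk‖ ^ 2 := by
  have run : IsLocalMomentumRun E η G (gradient f) wk w v := ⟨hw0, hv0, hv, hw⟩
  have hstep : 4 * (η * L) * E ≤ 1 := by
    have hE' : (E : ℝ) ≤ 1 / 4 * (1 / (η * L)) :=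
      hEcond.le.trans (mul_le_mul_of_nonneg_left (min_le_left _ _) (by norm_num))
    calc 4 * (η * L) * E ≤ 4 * (η * L) * (1 / 4 * (1 / (η * L))) := by gcongr
      _ = 1 := by field_simp
  calc ∑ τ ∈ range E, ∫ ω, ‖v τ ω - gradient f (w τ ω)‖ ^ 2 ∂(Measure.pi fun _ => μB)
      ≤ ∑ τ ∈ range E, (τ : ℝ) * (8 * (η * L) * ‖gradient f wk‖) ^ 2 :=
        sum_le_sum fun τ hτ => run.integral_norm_error_sq_le hGlip hGint hGunb hsmooth hη.le
          hL.le hstep (mem_range.1 hτ)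
    _ = (∑ τ ∈ range E, (τ : ℝ)) * (8 * (η * L) * ‖gradient f wk‖) ^ 2 := (sum_mul ..).symm
    _ ≤ E ^ 2 / 2 * (8 * (η * L) * ‖gradient f wk‖) ^ 2 :=
        mul_le_mul_of_nonneg_right (sum_range_natCast_le E) (sq_nonneg _)
    _ = 32 * (E : ℝ) ^ 2 * η ^ 2 * L ^ 2 * ‖gradient f wk‖ ^ 2 := by ring

/-- Lemma "fl-lem-new2".
A single client with an `L`-smooth objective `f` runs the SPIDER-style local-momentum
recursion in a round starting at `wk = w_k`; the batches `B_{k,1},…,B_{k,E−1}` are the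
coordinates of the product probability space `Fin E → Bt`, the stochastic gradients
`G · b` are `L`-Lipschitz and unbiased.  If `η < 1/L` and
`E < (1/4)·min(1/(ηL), 1/(η²L²) − 1/(ηL))`, then
the accumulated gradient-estimation error `e_{k,τ} = v_{k,τ} − ∇f(w_{k,τ})` satisfies
`Σ_{τ=0}^{E−1} E[‖e_{k,τ}‖²] ≤ 32E²η²L²·‖∇f(w_k)‖²`. -/
theorem stmt9
    {d : ℕ} {Bt : Type*} [MeasurableSpace Bt]
    (μB : Measure Bt) [IsProbabilityMeasure μB]
    (E : ℕ) (hE : 1 ≤ E) (η L : ℝ) (hη : 0 < η) (hL : 0 < L)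
    (f : EuclideanSpace ℝ (Fin d) → ℝ)
    (hdiff : Differentiable ℝ f)
    (hsmooth : ∀ x y, ‖gradient f x - gradient f y‖ ≤ L * ‖x - y‖)
    (G : EuclideanSpace ℝ (Fin d) → Bt → EuclideanSpace ℝ (Fin d))
    (hGlip : ∀ b x y, ‖G x b - G y b‖ ≤ L * ‖x - y‖)
    (hGint : ∀ x, Integrable (G x) μB)
    (hGunb : ∀ x, ∫ b, G x b ∂μB = gradient f x)
    (wk : EuclideanSpace ℝ (Fin d))
    (w v : ℕ → (Fin E → Bt) → EuclideanSpace ℝ (Fin d))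
    (hw0 : ∀ ω, w 0 ω = wk)
    (hv0 : ∀ ω, v 0 ω = gradient f wk)
    (hv : ∀ τ (h1 : 1 ≤ τ) (h2 : τ < E), ∀ ω,
      v τ ω = G (w τ ω) (ω ⟨τ, h2⟩) + v (τ - 1) ω - G (w (τ - 1) ω) (ω ⟨τ, h2⟩))
    (hw : ∀ τ, τ < E → ∀ ω, w (τ + 1) ω = w τ ω - η • v τ ω)
    (hηL : η < 1 / L)
    (hEcond : (E : ℝ) < (1 / 4) * min (1 / (η * L)) (1 / (η ^ 2 * L ^ 2) - 1 / (η * L))) :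
    ∑ τ ∈ Finset.range E,
        ∫ ω, ‖v τ ω - gradient f (w τ ω)‖ ^ 2 ∂(Measure.pi fun _ : Fin E => μB)
      ≤ 32 * (E : ℝ) ^ 2 * η ^ 2 * L ^ 2 * ‖gradient f wk‖ ^ 2 :=
  stmt9_general μB E η L hη hL f hsmooth G hGlip hGint hGunb wk w v hw0 hv0 hv hw hEcond
end

section
/- Consider a client i with L-smooth objective f_i and L-Lipschitz stochastic gradient maps, and two coupled local-momentum sequences of E steps from starting points w_k and w_{k−1} built with the SAME batches at each local step. If 2ηLE² ≤ 1, then the round-level displacements satisfy the Lipschitz-type bound ‖(w_k − w_{k,E}^{(i)}) − (w_{k−1} − ŵ_{k−1,E}^{(i)})‖ ≤ 2e·ηLE(E+1)·‖w_k − w_{k−1}‖, where e is Euler's number. -/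
/-!
Write `D = ‖w_k − w_{k−1}‖`. Since both sequences use the same maps `G τ`, the differences
`a_τ = ‖w_τ − ŵ_τ‖` and `b_τ = ‖v_τ − v̂_τ‖` obey `a_{τ+1} ≤ a_τ + η b_τ` and
`b_{τ+1} ≤ b_τ + L (a_{τ+1} + a_τ)`, with `a_0 = D` and `b_0 ≤ L D`. By induction,
`a_τ ≤ q^τ D` and `b_τ ≤ 2L(τ+1) q^τ D` for `q = 1 + 2ηLE`, and `q^E ≤ exp (2ηLE²) ≤ e`.
The round displacement difference telescopes to `η ∑_{τ<E} (v_τ − v̂_τ)`, whose norm is then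
at most `E · η · 2L(E+1) e D`.
-/

open Finset

lemma one_add_pow_le_exp_one {x : ℝ} {m n : ℕ} (hx : 0 ≤ x) (hmn : m ≤ n) (hnx : n * x ≤ 1) :
    (1 + x) ^ m ≤ Real.exp 1 :=
  calc (1 + x) ^ m ≤ Real.exp x ^ m := by
        gcongr; linarith [Real.add_one_le_exp x]
    _ = Real.exp (m * x) := (Real.exp_nat_mul x m).symm
    _ ≤ Real.exp 1 := by
        gcongr
        calc (m : ℝ) * x ≤ n * x := by gcongr
          _ ≤ 1 := hnx

lemma sub_eq_smul_sum_of_eq_sub_smul {R M : Type*} [Ring R] [AddCommGroup M] [Module R M]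
    {w v : ℕ → M} {η : R} {n : ℕ} (hw : ∀ τ < n, w (τ + 1) = w τ - η • v τ) :
    w 0 - w n = η • ∑ τ ∈ range n, v τ := by
  rw [← sum_range_sub', smul_sum]
  refine sum_congr rfl fun τ hτ => ?_
  rw [hw τ (mem_range.1 hτ), sub_sub_cancel]

lemma norm_sub_sub_sub_le_of_eq_sub_smul {M : Type*} [SeminormedAddCommGroup M]
    [NormedSpace ℝ M] {w w' v v' : ℕ → M} {η B : ℝ} {n : ℕ} (hη : 0 ≤ η)
    (hw : ∀ τ < n, w (τ + 1) = w τ - η • v τ) (hw' : ∀ τ < n, w' (τ + 1) = w' τ - η • v' τ)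
    (hB : ∀ τ < n, ‖v τ - v' τ‖ ≤ B) :
    ‖(w 0 - w n) - (w' 0 - w' n)‖ ≤ n * (η * B) :=
  calc ‖(w 0 - w n) - (w' 0 - w' n)‖ = ‖η • ∑ τ ∈ range n, (v τ - v' τ)‖ := by
        rw [sub_eq_smul_sum_of_eq_sub_smul hw, sub_eq_smul_sum_of_eq_sub_smul hw', ← smul_sub,
          ← sum_sub_distrib]
    _ ≤ η * ∑ τ ∈ range n, ‖v τ - v' τ‖ := by
        rw [norm_smul, Real.norm_of_nonneg hη]; gcongr; exact norm_sum_le _ _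
    _ ≤ η * ∑ _τ ∈ range n, B := by
        gcongr with τ hτ; exact hB τ (mem_range.1 hτ)
    _ = n * (η * B) := by rw [sum_const, card_range, nsmul_eq_mul]; ring

lemma norm_sub_smul_sub_sub_smul_le {M : Type*} [SeminormedAddCommGroup M] [NormedSpace ℝ M]
    {η : ℝ} (hη : 0 ≤ η) (x y u v : M) :
    ‖(x - η • u) - (y - η • v)‖ ≤ ‖x - y‖ + η * ‖u - v‖ :=
  calc ‖(x - η • u) - (y - η • v)‖ = ‖(x - y) - η • (u - v)‖ := by
        rw [smul_sub]; abel_nf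
    _ ≤ ‖x - y‖ + ‖η • (u - v)‖ := norm_sub_le _ _
    _ = ‖x - y‖ + η * ‖u - v‖ := by rw [norm_smul, Real.norm_of_nonneg hη]

lemma norm_momentum_sub_momentum_le {M N : Type*} [SeminormedAddCommGroup M]
    [SeminormedAddCommGroup N] {G : M → N} {L : ℝ} (hG : ∀ x y, ‖G x - G y‖ ≤ L * ‖x - y‖)
    (x x' y y' : M) (u u' : N) :
    ‖(G x' + u - G x) - (G y' + u' - G y)‖ ≤ ‖u - u'‖ + L * (‖x' - y'‖ + ‖x - y‖) :=
  calc ‖(G x' + u - G x) - (G y' + u' - G y)‖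
        = ‖(u - u') + (G x' - G y') - (G x - G y)‖ := by abel_nf
    _ ≤ ‖u - u'‖ + ‖G x' - G y'‖ + ‖G x - G y‖ :=
        norm_sub_le_of_le (norm_add_le _ _) le_rfl
    _ ≤ ‖u - u'‖ + L * (‖x' - y'‖ + ‖x - y‖) := by linarith [hG x' y', hG x y]

lemma coupled_growth_bound {a b : ℕ → ℝ} {L η D : ℝ} {N : ℕ} (hL : 0 ≤ L) (hη : 0 ≤ η)
    (hD : 0 ≤ D) (ha₀ : a 0 ≤ D) (hb₀ : b 0 ≤ 2 * L * D)
    (ha : ∀ τ, τ + 1 < N → a (τ + 1) ≤ a τ + η * b τ)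
    (hb : ∀ τ, τ + 1 < N → b (τ + 1) ≤ b τ + L * (a (τ + 1) + a τ)) :
    ∀ τ < N, a τ ≤ (1 + 2 * η * L * N) ^ τ * D ∧
      b τ ≤ 2 * L * (τ + 1) * (1 + 2 * η * L * N) ^ τ * D := by
  set q := 1 + 2 * η * L * N
  intro τ
  induction τ with
  | zero => intro _; simpa using ⟨ha₀, hb₀⟩
  | succ τ ih =>
    intro hτ
    obtain ⟨iha, ihb⟩ := ih (by omega)
    have hτN : ((τ + 1 : ℕ) : ℝ) ≤ N := by exact_mod_cast hτ.le
    have hq : 1 + 2 * η * L * (τ + 1) ≤ q := by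
      have := mul_le_mul_of_nonneg_left hτN (by positivity : 0 ≤ 2 * η * L)
      push_cast at this
      linarith
    have hq₁ : 1 ≤ q := le_trans (le_add_of_nonneg_right (by positivity)) hq
    have ha' : a (τ + 1) ≤ q ^ (τ + 1) * D :=
      calc a (τ + 1) ≤ a τ + η * b τ := ha τ hτ
        _ ≤ q ^ τ * D + η * (2 * L * (τ + 1) * q ^ τ * D) := by gcongr
        _ = (1 + 2 * η * L * (τ + 1)) * (q ^ τ * D) := by ring
        _ ≤ q * (q ^ τ * D) := by gcongr
        _ = q ^ (τ + 1) * D := by ring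
    refine ⟨ha', ?_⟩
    have hpow : q ^ τ ≤ q ^ (τ + 1) := pow_le_pow_right₀ hq₁ τ.le_succ
    calc b (τ + 1) ≤ b τ + L * (a (τ + 1) + a τ) := hb τ hτ
      _ ≤ 2 * L * (τ + 1) * q ^ τ * D + L * (q ^ (τ + 1) * D + q ^ τ * D) := by gcongr
      _ ≤ 2 * L * (τ + 1) * q ^ (τ + 1) * D + L * (q ^ (τ + 1) * D + q ^ (τ + 1) * D) := by
          gcongr
      _ = 2 * L * ((τ + 1 : ℕ) + 1) * q ^ (τ + 1) * D := by push_cast; ring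

theorem stmt11_general
    {d : ℕ} (L η : ℝ) (hL : 0 < L) (hη : 0 < η) (E : ℕ)
    (f : EuclideanSpace ℝ (Fin d) → ℝ)
    (hsmooth : ∀ x y, ‖gradient f x - gradient f y‖ ≤ L * ‖x - y‖)
    (G : ℕ → EuclideanSpace ℝ (Fin d) → EuclideanSpace ℝ (Fin d))
    (hGlip : ∀ τ x y, ‖G τ x - G τ y‖ ≤ L * ‖x - y‖)
    (wk wk1 : EuclideanSpace ℝ (Fin d))
    (w wh v vh : ℕ → EuclideanSpace ℝ (Fin d))
    (hw0 : w 0 = wk) (hwh0 : wh 0 = wk1)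
    (hv0 : v 0 = gradient f wk) (hvh0 : vh 0 = gradient f wk1)
    (hv : ∀ τ, 1 ≤ τ → τ ≤ E - 1 → v τ = G τ (w τ) + v (τ - 1) - G τ (w (τ - 1)))
    (hvh : ∀ τ, 1 ≤ τ → τ ≤ E - 1 → vh τ = G τ (wh τ) + vh (τ - 1) - G τ (wh (τ - 1)))
    (hw : ∀ τ, τ ≤ E - 1 → w (τ + 1) = w τ - η • v τ)
    (hwh : ∀ τ, τ ≤ E - 1 → wh (τ + 1) = wh τ - η • vh τ)
    (hstep : 2 * η * L * (E : ℝ) ^ 2 ≤ 1) :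
    ‖(wk - w E) - (wk1 - wh E)‖
      ≤ 2 * Real.exp 1 * (η * L * E * ((E : ℝ) + 1)) * ‖wk - wk1‖ := by
  set D := ‖wk - wk1‖
  have hgrowth := coupled_growth_bound (a := fun τ => ‖w τ - wh τ‖)
    (b := fun τ => ‖v τ - vh τ‖) (D := D) (N := E) hL.le hη.le (norm_nonneg _)
    (by simp [D, hw0, hwh0])
    (by
      simp only [hv0, hvh0]
      linarith [hsmooth wk wk1, mul_nonneg hL.le (norm_nonneg (wk - wk1))])
    (fun τ hτ => by
      simpa only [hw τ (by omega), hwh τ (by omega)] using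
        norm_sub_smul_sub_sub_smul_le hη.le (w τ) (wh τ) (v τ) (vh τ))
    (fun τ hτ => by
      simpa only [hv (τ + 1) (by omega) (by omega), hvh (τ + 1) (by omega) (by omega),
        Nat.add_sub_cancel] using norm_momentum_sub_momentum_le (hGlip (τ + 1)) _ _ _ _ _ _)
  have hv_bound : ∀ τ < E, ‖v τ - vh τ‖ ≤ 2 * Real.exp 1 * L * (E + 1) * D := by
    intro τ hτ
    have hτE : (τ : ℝ) + 1 ≤ E + 1 := by exact_mod_cast Nat.succ_le_succ hτ.le
    have hq : (1 + 2 * η * L * E) ^ τ ≤ Real.exp 1 :=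
      one_add_pow_le_exp_one (by positivity) hτ.le (by linarith)
    calc ‖v τ - vh τ‖ ≤ 2 * L * (τ + 1) * (1 + 2 * η * L * E) ^ τ * D := (hgrowth τ hτ).2
      _ ≤ 2 * L * (E + 1) * Real.exp 1 * D := by gcongr
      _ = 2 * Real.exp 1 * L * (E + 1) * D := by ring
  rw [← hw0, ← hwh0]
  calc ‖(w 0 - w E) - (wh 0 - wh E)‖ ≤ E * (η * (2 * Real.exp 1 * L * (E + 1) * D)) :=
        norm_sub_sub_sub_le_of_eq_sub_smul hη.le (fun τ hτ => hw τ (by omega))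
          (fun τ hτ => hwh τ (by omega)) hv_bound
    _ = 2 * Real.exp 1 * (η * L * E * ((E : ℝ) + 1)) * D := by ring

/-- Lemma "nov-1-lem3", first part.
Client `i` has an `L`-smooth objective `f` and `L`-Lipschitz stochastic-gradient maps
`G τ = ∇̃f_i(·; B_{k,τ}^{(i)})` (the batches are fixed, so this is deterministic).
Two coupled local-momentum sequences of `E` steps are run from the starting points
`wk = w_k` and `wk1 = w_{k−1}`, using the SAME batch at each local step.
If `2ηLE² ≤ 1`, then
`‖(w_k − w_{k,E}) − (w_{k−1} − ŵ_{k−1,E})‖ ≤ 2e·ηLE(E+1)·‖w_k − w_{k−1}‖`. -/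
theorem stmt11
    {d : ℕ} (L η : ℝ) (hL : 0 < L) (hη : 0 < η) (E : ℕ) (hE : 1 ≤ E)
    (f : EuclideanSpace ℝ (Fin d) → ℝ)
    (hdiff : Differentiable ℝ f)
    (hsmooth : ∀ x y, ‖gradient f x - gradient f y‖ ≤ L * ‖x - y‖)
    (G : ℕ → EuclideanSpace ℝ (Fin d) → EuclideanSpace ℝ (Fin d))
    (hGlip : ∀ τ x y, ‖G τ x - G τ y‖ ≤ L * ‖x - y‖)
    (wk wk1 : EuclideanSpace ℝ (Fin d))
    (w wh v vh : ℕ → EuclideanSpace ℝ (Fin d))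
    (hw0 : w 0 = wk) (hwh0 : wh 0 = wk1)
    (hv0 : v 0 = gradient f wk) (hvh0 : vh 0 = gradient f wk1)
    (hv : ∀ τ, 1 ≤ τ → τ ≤ E - 1 → v τ = G τ (w τ) + v (τ - 1) - G τ (w (τ - 1)))
    (hvh : ∀ τ, 1 ≤ τ → τ ≤ E - 1 → vh τ = G τ (wh τ) + vh (τ - 1) - G τ (wh (τ - 1)))
    (hw : ∀ τ, τ ≤ E - 1 → w (τ + 1) = w τ - η • v τ)
    (hwh : ∀ τ, τ ≤ E - 1 → wh (τ + 1) = wh τ - η • vh τ)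
    (hstep : 2 * η * L * (E : ℝ) ^ 2 ≤ 1) :
    ‖(wk - w E) - (wk1 - wh E)‖
      ≤ 2 * Real.exp 1 * (η * L * E * ((E : ℝ) + 1)) * ‖wk - wk1‖ :=
  stmt11_general L η hL hη E f hsmooth G hGlip wk wk1 w wh v vh hw0 hwh0 hv0 hvh0 hv hvh hw hwh
    hstep
end

section
/- For a single client running E local SGD steps with an L-smooth objective f_i and unbiased stochastic gradients of variance at most σ², if η_k·L·E ≤ 1/2 then for every τ ≤ E the accumulated local gradient norms satisfy Σ_{t=0}^{τ−1} E[‖∇f_i(w_{k,t}^{(i)})‖²] ≤ (τ/3)·(8·E[‖∇f_i(w_k)‖²] + σ²). -/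
/-!
Write `S_t = ∑_{s<t} ‖w_{s+1} - w_s‖²`. Smoothness and Cauchy–Schwarz give, along every path,
`‖∇f(w_t)‖² ≤ 2L²t·S_t + 2‖∇f(w_k)‖²`. Integrating out the batch of step `t` first,
unbiasedness and the variance bound turn this into
`E S_{t+1} ≤ (1 + 2(ηL)²t)·E S_t + η²(2‖∇f(w_k)‖² + σ²)`,
and because `ηLt ≤ 1/2` this recursion keeps `E S_t ≤ 2tη²(2‖∇f(w_k)‖² + σ²)`. Hence
`E‖∇f(w_t)‖² ≤ 4(ηLt)²(2‖∇f(w_k)‖² + σ²) + 2‖∇f(w_k)‖²`, and `∑_{t<τ} t² ≤ τ³/3` finishes.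

The oracle `G` is not assumed jointly measurable, so the iterates need not be measurable:
expectations of nonnegative quantities are lower Lebesgue integrals `∫⁻`, for which Tonelli
survives as an inequality (`lintegral_prod_le`, `lintegral_map_le`).
-/

open MeasureTheory Finset
open scoped ENNReal

theorem three_mul_sum_range_sq_le (τ : ℕ) : 3 * ∑ t ∈ range τ, (t : ℝ) ^ 2 ≤ (τ : ℝ) ^ 3 := by
  induction τ with
  | zero => simp
  | succ n ih =>
    rw [sum_range_succ]
    push_cast
    nlinarith [(n.cast_nonneg : (0 : ℝ) ≤ n)]

theorem sum_range_four_mul_sq_add_le {γ K c : ℝ} {τ : ℕ} (hγ : 0 ≤ γ) (hγτ : γ * τ ≤ 1 / 2)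
    (hK : 0 ≤ K) :
    ∑ t ∈ range τ, (4 * (γ * t) ^ 2 * K + c) ≤ τ * (K / 3 + c) := by
  have hsq := three_mul_sum_range_sq_le τ
  have hγτ2 : (γ * τ) ^ 2 ≤ 1 / 4 := by nlinarith [mul_nonneg hγ (Nat.cast_nonneg (α := ℝ) τ)]
  have hfirst :
      ∑ t ∈ range τ, 4 * (γ * t) ^ 2 * K = 4 * γ ^ 2 * K * ∑ t ∈ range τ, (t : ℝ) ^ 2 := by
    rw [mul_sum]
    exact sum_congr rfl fun t _ => by ring
  rw [sum_add_distrib, hfirst, sum_const, card_range, nsmul_eq_mul]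
  nlinarith [mul_le_mul_of_nonneg_left hsq (by positivity : 0 ≤ 4 * γ ^ 2 * K),
    mul_le_mul_of_nonneg_right hγτ2 (by positivity : 0 ≤ (τ : ℝ) * K)]

theorem ENNReal.le_two_mul_of_le_one_add_mul {u : ℕ → ℝ≥0∞} {a : ℝ} {c : ℝ≥0∞} {E : ℕ}
    (ha : 0 ≤ a) (haE : a * E ≤ 1 / 2) (h0 : u 0 = 0)
    (hu : ∀ t < E, u (t + 1) ≤ ENNReal.ofReal (1 + 2 * a ^ 2 * t) * u t + c) :
    ∀ t ≤ E, u t ≤ ENNReal.ofReal (2 * t) * c := by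
  intro t
  induction t with
  | zero => simp [h0]
  | succ t ih =>
    intro ht
    have hat : a * t ≤ 1 / 2 := by
      have : (t : ℝ) ≤ E := by exact_mod_cast Nat.le_of_lt ht
      nlinarith
    calc u (t + 1) ≤ ENNReal.ofReal (1 + 2 * a ^ 2 * t) * (ENNReal.ofReal (2 * t) * c) + c :=
          (hu t ht).trans (by gcongr; exact ih (Nat.le_of_lt ht))
      _ = ENNReal.ofReal ((1 + 2 * a ^ 2 * t) * (2 * t) + 1) * c := by
          rw [ENNReal.ofReal_add (by positivity) zero_le_one,
            ENNReal.ofReal_mul (by positivity : (0 : ℝ) ≤ 1 + 2 * a ^ 2 * t),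
            ENNReal.ofReal_one, add_mul, one_mul]
          ring
      _ ≤ ENNReal.ofReal (2 * ((t + 1 : ℕ) : ℝ)) * c := by
          gcongr
          push_cast
          nlinarith [mul_nonneg ha (Nat.cast_nonneg (α := ℝ) t)]

section Increments

variable {V : Type*} [NormedAddCommGroup V]

def sumSqIncrements (x : ℕ → V) (t : ℕ) : ℝ :=
  ∑ s ∈ range t, ‖x (s + 1) - x s‖ ^ 2

theorem sumSqIncrements_nonneg (x : ℕ → V) (t : ℕ) : 0 ≤ sumSqIncrements x t :=
  sum_nonneg fun _ _ => sq_nonneg _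

theorem sumSqIncrements_succ (x : ℕ → V) (t : ℕ) :
    sumSqIncrements x (t + 1) = sumSqIncrements x t + ‖x (t + 1) - x t‖ ^ 2 :=
  sum_range_succ _ _

theorem sumSqIncrements_congr {x y : ℕ → V} {t : ℕ} (h : ∀ s ≤ t, x s = y s) :
    sumSqIncrements x t = sumSqIncrements y t :=
  sum_congr rfl fun s hs => by
    rw [h s (mem_range.1 hs).le, h (s + 1) (mem_range.1 hs)]

theorem norm_sub_sq_le_mul_sumSqIncrements (x : ℕ → V) (t : ℕ) :
    ‖x t - x 0‖ ^ 2 ≤ t * sumSqIncrements x t := by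
  have htel : x t - x 0 = ∑ s ∈ range t, (x (s + 1) - x s) := (sum_range_sub x t).symm
  calc ‖x t - x 0‖ ^ 2 ≤ (∑ s ∈ range t, ‖x (s + 1) - x s‖) ^ 2 := by
        rw [htel]
        gcongr
        exact norm_sum_le _ _
    _ ≤ t * sumSqIncrements x t := by
        unfold sumSqIncrements
        simpa using sq_sum_le_card_mul_sum_sq (s := range t) (f := fun s => ‖x (s + 1) - x s‖)

theorem norm_sq_le_sumSqIncrements {g : V → V} {L : ℝ}
    (hg : ∀ y z, ‖g y - g z‖ ≤ L * ‖y - z‖) (x : ℕ → V) (t : ℕ) :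
    ‖g (x t)‖ ^ 2 ≤ 2 * L ^ 2 * t * sumSqIncrements x t + 2 * ‖g (x 0)‖ ^ 2 := by
  have hdist : ‖g (x t) - g (x 0)‖ ^ 2 ≤ L ^ 2 * ‖x t - x 0‖ ^ 2 := by
    rw [← mul_pow]
    exact pow_le_pow_left₀ (norm_nonneg _) (hg _ _) 2
  calc ‖g (x t)‖ ^ 2 ≤ (‖g (x t) - g (x 0)‖ + ‖g (x 0)‖) ^ 2 := by
        gcongr
        exact norm_le_norm_sub_add _ _
    _ ≤ 2 * (‖g (x t) - g (x 0)‖ ^ 2 + ‖g (x 0)‖ ^ 2) := add_sq_le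
    _ ≤ 2 * L ^ 2 * t * sumSqIncrements x t + 2 * ‖g (x 0)‖ ^ 2 := by
        nlinarith [norm_sub_sq_le_mul_sumSqIncrements x t, sq_nonneg L]

end Increments

section InnerProductSpace

variable {V : Type*} [NormedAddCommGroup V] [InnerProductSpace ℝ V] [CompleteSpace V]

theorem integral_norm_sq_eq_integral_norm_sub_sq_add {Ω : Type*} [MeasurableSpace Ω]
    {μ : Measure Ω} [IsProbabilityMeasure μ] {X : Ω → V} {m : V} (hX : Integrable X μ)
    (hmean : ∫ ω, X ω ∂μ = m) (hvar : Integrable (fun ω => ‖X ω - m‖ ^ 2) μ) :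
    Integrable (fun ω => ‖X ω‖ ^ 2) μ ∧
      ∫ ω, ‖X ω‖ ^ 2 ∂μ = ∫ ω, ‖X ω - m‖ ^ 2 ∂μ + ‖m‖ ^ 2 := by
  have hcent : Integrable (fun ω => X ω - m) μ := hX.sub (integrable_const m)
  have hcross : Integrable (fun ω => 2 * inner ℝ m (X ω - m)) μ :=
    (hcent.const_inner m).const_mul 2
  have hsplit : (fun ω => ‖X ω‖ ^ 2)
      = fun ω => ‖X ω - m‖ ^ 2 + (2 * inner ℝ m (X ω - m) + ‖m‖ ^ 2) := by
    funext ω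
    have h := norm_add_sq_real (X ω - m) m
    rw [sub_add_cancel] at h
    rw [h, real_inner_comm]
    ring
  have hcentered : ∫ ω, inner ℝ m (X ω - m) ∂μ = 0 := by
    rw [integral_inner hcent, integral_sub hX (integrable_const m), hmean]
    simp
  have hrest : Integrable (fun ω => 2 * inner ℝ m (X ω - m) + ‖m‖ ^ 2) μ :=
    hcross.add (integrable_const _)
  rw [hsplit]
  refine ⟨hvar.add hrest, ?_⟩
  rw [integral_add hvar hrest, integral_add hcross (integrable_const _), integral_const_mul,
    hcentered]
  simp

theorem lintegral_ofReal_norm_sq_le {B : Type*} [MeasurableSpace B] {μB : Measure B}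
    [IsProbabilityMeasure μB] {G : V → B → V} {g : V → V} {σ : ℝ}
    (hGint : ∀ x, Integrable (G x) μB) (hGunb : ∀ x, ∫ b, G x b ∂μB = g x)
    (hGvarInt : ∀ x, Integrable (fun b => ‖G x b - g x‖ ^ 2) μB)
    (hGvar : ∀ x, ∫ b, ‖G x b - g x‖ ^ 2 ∂μB ≤ σ ^ 2) (y : V) :
    ∫⁻ b, ENNReal.ofReal (‖G y b‖ ^ 2) ∂μB ≤ ENNReal.ofReal (σ ^ 2 + ‖g y‖ ^ 2) := by
  obtain ⟨hint, heq⟩ :=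
    integral_norm_sq_eq_integral_norm_sub_sq_add (hGint y) (hGunb y) (hGvarInt y)
  rw [← ofReal_integral_eq_lintegral_ofReal hint
    (Filter.Eventually.of_forall fun _ => by positivity), heq]
  exact ENNReal.ofReal_le_ofReal (by linarith [hGvar y])

end InnerProductSpace

theorem integral_le_of_lintegral_ofReal_le {α : Type*} [MeasurableSpace α] {μ : Measure α}
    {f : α → ℝ} (hf : ∀ x, 0 ≤ f x) {r : ℝ} (hr : 0 ≤ r)
    (h : ∫⁻ x, ENNReal.ofReal (f x) ∂μ ≤ ENNReal.ofReal r) : ∫ x, f x ∂μ ≤ r := by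
  by_cases hm : AEStronglyMeasurable f μ
  · rw [integral_eq_lintegral_of_nonneg_ae (Filter.Eventually.of_forall hf) hm]
    exact ENNReal.toReal_le_of_le_ofReal hr h
  · rw [integral_undef fun hi => hm hi.aestronglyMeasurable]
    exact hr

theorem lintegral_pi_le_lintegral_lintegral_update {E : ℕ} {α : Fin E → Type*}
    [∀ j, MeasurableSpace (α j)] (μ : ∀ j, Measure (α j)) [∀ j, SigmaFinite (μ j)]
    (i : Fin E) [IsProbabilityMeasure (μ i)] (F : (∀ j, α j) → ℝ≥0∞) :
    ∫⁻ ω, F ω ∂Measure.pi μ ≤ ∫⁻ ω, ∫⁻ b, F (Function.update ω i b) ∂μ i ∂Measure.pi μ := by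
  obtain ⟨n, rfl⟩ : ∃ n, E = n + 1 := Nat.exists_eq_add_one.2 i.pos
  obtain ⟨b₀⟩ := nonempty_of_isProbabilityMeasure (μ i)
  set e := MeasurableEquiv.piFinSuccAbove α i
  set ν' := Measure.pi fun j => μ (i.succAbove j)
  set Φ : (∀ j, α j) → ℝ≥0∞ := fun ω => ∫⁻ b, F (Function.update ω i b) ∂μ i
  have he : MeasurePreserving e.symm ((μ i).prod ν') (Measure.pi μ) :=
    (measurePreserving_piFinSuccAbove μ i).symm
  -- `Φ` ignores coordinate `i`, so the iterated integral can be folded back into `Measure.pi μ`.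
  have hΦ : ∀ b ω', Φ (i.insertNth b ω') = Φ (i.insertNth b₀ ω') := by
    intro b ω'
    simp only [Φ, Fin.update_insertNth]
  calc ∫⁻ ω, F ω ∂Measure.pi μ
      = ∫⁻ p, F (i.insertNth p.2 p.1) ∂ν'.prod (μ i) := by
        rw [← he.lintegral_comp_emb e.symm.measurableEmbedding, ← lintegral_prod_swap]
        rfl
    _ ≤ ∫⁻ ω', Φ (i.insertNth b₀ ω') ∂ν' := by
        refine (lintegral_prod_le _).trans (lintegral_mono fun ω' => ?_)
        simp only [Φ, Fin.update_insertNth, le_refl]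
    _ ≤ ∫⁻ p, Φ (i.insertNth b₀ p.2) ∂(μ i).prod ν' := by
        have hsnd : ((μ i).prod ν').map Prod.snd = ν' := by simp
        calc ∫⁻ ω', Φ (i.insertNth b₀ ω') ∂ν'
            = ∫⁻ ω', Φ (i.insertNth b₀ ω') ∂((μ i).prod ν').map Prod.snd := by rw [hsnd]
          _ ≤ _ := lintegral_map_le _ _
    _ = ∫⁻ ω, Φ ω ∂Measure.pi μ := by
        rw [← he.lintegral_comp_emb e.symm.measurableEmbedding]
        exact lintegral_congr fun p => (hΦ p.1 p.2).symm

section LocalSGD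

variable {V B : Type*} [NormedAddCommGroup V] [NormedSpace ℝ V] {E : ℕ} {η : ℝ}
  {G : V → B → V} {w₀ : V} {w : ℕ → (Fin E → B) → V}

theorem localSGD_apply_update_of_le (hw0 : ∀ ω, w 0 ω = w₀)
    (hw : ∀ τ (h : τ < E), ∀ ω, w (τ + 1) ω = w τ ω - η • G (w τ ω) (ω ⟨τ, h⟩))
    (i : Fin E) (b : B) : ∀ s ≤ (i : ℕ), ∀ ω, w s (Function.update ω i b) = w s ω := by
  intro s
  induction s with
  | zero => simp [hw0]
  | succ s ih =>
    intro hs ω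
    have hsE : s < E := by omega
    have hsi : (⟨s, hsE⟩ : Fin E) ≠ i := Fin.ne_of_val_ne (by simp only; omega)
    rw [hw s hsE, hw s hsE, ih (by omega), Function.update_of_ne hsi]

variable [MeasurableSpace B] {μB : Measure B} [IsProbabilityMeasure μB] {L σ : ℝ} {g : V → V}

theorem lintegral_sumSqIncrements_succ_le (hw0 : ∀ ω, w 0 ω = w₀)
    (hw : ∀ τ (h : τ < E), ∀ ω, w (τ + 1) ω = w τ ω - η • G (w τ ω) (ω ⟨τ, h⟩))
    (hg : ∀ x y, ‖g x - g y‖ ≤ L * ‖x - y‖)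
    (hmoment : ∀ y, ∫⁻ b, ENNReal.ofReal (‖G y b‖ ^ 2) ∂μB ≤ ENNReal.ofReal (σ ^ 2 + ‖g y‖ ^ 2))
    {t : ℕ} (ht : t < E) :
    ∫⁻ ω, ENNReal.ofReal (sumSqIncrements (w · ω) (t + 1)) ∂Measure.pi (fun _ => μB)
      ≤ ENNReal.ofReal (1 + 2 * (η * L) ^ 2 * t)
          * ∫⁻ ω, ENNReal.ofReal (sumSqIncrements (w · ω) t) ∂Measure.pi (fun _ => μB)
        + ENNReal.ofReal (η ^ 2 * (2 * ‖g w₀‖ ^ 2 + σ ^ 2)) := by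
  set i : Fin E := ⟨t, ht⟩
  have hfix := localSGD_apply_update_of_le hw0 hw i
  have hupdate : ∀ ω b, sumSqIncrements (w · (Function.update ω i b)) (t + 1)
      = sumSqIncrements (w · ω) t + η ^ 2 * ‖G (w t ω) b‖ ^ 2 := by
    intro ω b
    rw [sumSqIncrements_succ, sumSqIncrements_congr fun s hs => hfix b s hs ω, hw t ht,
      hfix b t le_rfl, Function.update_self, sub_sub_cancel_left, norm_neg, norm_smul,
      Real.norm_eq_abs, mul_pow, sq_abs]
  have hbatch : ∀ ω,
      ∫⁻ b, ENNReal.ofReal (sumSqIncrements (w · (Function.update ω i b)) (t + 1)) ∂μB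
        ≤ ENNReal.ofReal (1 + 2 * (η * L) ^ 2 * t) * ENNReal.ofReal (sumSqIncrements (w · ω) t)
          + ENNReal.ofReal (η ^ 2 * (2 * ‖g w₀‖ ^ 2 + σ ^ 2)) := by
    intro ω
    have hS := sumSqIncrements_nonneg (w · ω) t
    have hgrad : ‖g (w t ω)‖ ^ 2 ≤ 2 * L ^ 2 * t * sumSqIncrements (w · ω) t + 2 * ‖g w₀‖ ^ 2 := by
      simpa only [hw0] using norm_sq_le_sumSqIncrements hg (w · ω) t
    calc ∫⁻ b, ENNReal.ofReal (sumSqIncrements (w · (Function.update ω i b)) (t + 1)) ∂μB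
        = ENNReal.ofReal (sumSqIncrements (w · ω) t)
            + ENNReal.ofReal (η ^ 2) * ∫⁻ b, ENNReal.ofReal (‖G (w t ω) b‖ ^ 2) ∂μB := by
          rw [lintegral_congr fun b => by
              rw [hupdate, ENNReal.ofReal_add hS (by positivity), ENNReal.ofReal_mul (sq_nonneg η)],
            lintegral_add_left measurable_const, lintegral_const, measure_univ, mul_one,
            lintegral_const_mul' _ _ ENNReal.ofReal_ne_top]
      _ ≤ ENNReal.ofReal (sumSqIncrements (w · ω) t)
            + ENNReal.ofReal (η ^ 2) * ENNReal.ofReal (σ ^ 2 + ‖g (w t ω)‖ ^ 2) := by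
          gcongr
          exact hmoment _
      _ ≤ _ := by
          rw [← ENNReal.ofReal_mul (sq_nonneg η), ← ENNReal.ofReal_add hS (by positivity),
            ← ENNReal.ofReal_mul (by positivity),
            ← ENNReal.ofReal_add (by positivity) (by positivity)]
          apply ENNReal.ofReal_le_ofReal
          nlinarith [sq_nonneg η]
  calc ∫⁻ ω, ENNReal.ofReal (sumSqIncrements (w · ω) (t + 1)) ∂Measure.pi (fun _ => μB)
      ≤ ∫⁻ ω, ∫⁻ b, ENNReal.ofReal (sumSqIncrements (w · (Function.update ω i b)) (t + 1)) ∂μB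
          ∂Measure.pi (fun _ => μB) :=
        lintegral_pi_le_lintegral_lintegral_update (fun _ => μB) i _
    _ ≤ _ := (lintegral_mono hbatch).trans_eq (by
        rw [lintegral_add_right' _ aemeasurable_const,
          lintegral_const_mul' _ _ ENNReal.ofReal_ne_top,
          lintegral_const, measure_univ, mul_one])

theorem lintegral_sumSqIncrements_le (hw0 : ∀ ω, w 0 ω = w₀)
    (hw : ∀ τ (h : τ < E), ∀ ω, w (τ + 1) ω = w τ ω - η • G (w τ ω) (ω ⟨τ, h⟩))
    (hg : ∀ x y, ‖g x - g y‖ ≤ L * ‖x - y‖)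
    (hmoment : ∀ y, ∫⁻ b, ENNReal.ofReal (‖G y b‖ ^ 2) ∂μB ≤ ENNReal.ofReal (σ ^ 2 + ‖g y‖ ^ 2))
    (hηL : 0 ≤ η * L) (hstep : η * L * E ≤ 1 / 2) {t : ℕ} (ht : t ≤ E) :
    ∫⁻ ω, ENNReal.ofReal (sumSqIncrements (w · ω) t) ∂Measure.pi (fun _ => μB)
      ≤ ENNReal.ofReal (2 * t) * ENNReal.ofReal (η ^ 2 * (2 * ‖g w₀‖ ^ 2 + σ ^ 2)) :=
  ENNReal.le_two_mul_of_le_one_add_mul hηL hstep (by simp [sumSqIncrements])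
    (fun _ hs => lintegral_sumSqIncrements_succ_le hw0 hw hg hmoment hs) t ht

theorem integral_norm_sq_localSGD_le (hw0 : ∀ ω, w 0 ω = w₀)
    (hw : ∀ τ (h : τ < E), ∀ ω, w (τ + 1) ω = w τ ω - η • G (w τ ω) (ω ⟨τ, h⟩))
    (hg : ∀ x y, ‖g x - g y‖ ≤ L * ‖x - y‖)
    (hmoment : ∀ y, ∫⁻ b, ENNReal.ofReal (‖G y b‖ ^ 2) ∂μB ≤ ENNReal.ofReal (σ ^ 2 + ‖g y‖ ^ 2))
    (hηL : 0 ≤ η * L) (hstep : η * L * E ≤ 1 / 2) {t : ℕ} (ht : t ≤ E) :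
    ∫ ω, ‖g (w t ω)‖ ^ 2 ∂Measure.pi (fun _ => μB)
      ≤ 4 * (η * L * t) ^ 2 * (2 * ‖g w₀‖ ^ 2 + σ ^ 2) + 2 * ‖g w₀‖ ^ 2 := by
  refine integral_le_of_lintegral_ofReal_le (fun _ => by positivity) (by positivity) ?_
  have hgrad : ∀ ω, ENNReal.ofReal (‖g (w t ω)‖ ^ 2)
      ≤ ENNReal.ofReal (2 * L ^ 2 * t) * ENNReal.ofReal (sumSqIncrements (w · ω) t)
        + ENNReal.ofReal (2 * ‖g w₀‖ ^ 2) := by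
    intro ω
    have hS := sumSqIncrements_nonneg (w · ω) t
    rw [← ENNReal.ofReal_mul (by positivity), ← ENNReal.ofReal_add (by positivity)
      (by positivity)]
    exact ENNReal.ofReal_le_ofReal
      (by simpa only [hw0] using norm_sq_le_sumSqIncrements hg (w · ω) t)
  calc ∫⁻ ω, ENNReal.ofReal (‖g (w t ω)‖ ^ 2) ∂Measure.pi (fun _ => μB)
      ≤ ENNReal.ofReal (2 * L ^ 2 * t)
          * ∫⁻ ω, ENNReal.ofReal (sumSqIncrements (w · ω) t) ∂Measure.pi (fun _ => μB)
        + ENNReal.ofReal (2 * ‖g w₀‖ ^ 2) := by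
        refine (lintegral_mono hgrad).trans_eq ?_
        rw [lintegral_add_right' _ aemeasurable_const,
          lintegral_const_mul' _ _ ENNReal.ofReal_ne_top,
          lintegral_const, measure_univ, mul_one]
    _ ≤ ENNReal.ofReal (2 * L ^ 2 * t)
          * (ENNReal.ofReal (2 * t) * ENNReal.ofReal (η ^ 2 * (2 * ‖g w₀‖ ^ 2 + σ ^ 2)))
        + ENNReal.ofReal (2 * ‖g w₀‖ ^ 2) := by
        gcongr
        exact lintegral_sumSqIncrements_le hw0 hw hg hmoment hηL hstep ht
    _ = _ := by
        rw [← ENNReal.ofReal_mul (by positivity), ← ENNReal.ofReal_mul (by positivity),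
          ← ENNReal.ofReal_add (by positivity) (by positivity)]
        congr 1
        ring

end LocalSGD

theorem stmt19_general
    {d : ℕ} {Bt : Type*} [MeasurableSpace Bt]
    (μB : Measure Bt) [IsProbabilityMeasure μB]
    (E : ℕ) (η L σ : ℝ) (hη : 0 < η) (hL : 0 < L)
    (f : EuclideanSpace ℝ (Fin d) → ℝ)
    (hsmooth : ∀ x y, ‖gradient f x - gradient f y‖ ≤ L * ‖x - y‖)
    (G : EuclideanSpace ℝ (Fin d) → Bt → EuclideanSpace ℝ (Fin d))
    (hGint : ∀ x, Integrable (G x) μB)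
    (hGunb : ∀ x, ∫ b, G x b ∂μB = gradient f x)
    (hGvarInt : ∀ x, Integrable (fun b => ‖G x b - gradient f x‖ ^ 2) μB)
    (hGvar : ∀ x, ∫ b, ‖G x b - gradient f x‖ ^ 2 ∂μB ≤ σ ^ 2)
    (wk : EuclideanSpace ℝ (Fin d))
    (w : ℕ → (Fin E → Bt) → EuclideanSpace ℝ (Fin d))
    (hw0 : ∀ ω, w 0 ω = wk)
    (hw : ∀ τ (h : τ < E), ∀ ω, w (τ + 1) ω = w τ ω - η • G (w τ ω) (ω ⟨τ, h⟩))
    (hstep : η * L * E ≤ 1 / 2) :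
    ∀ τ, τ ≤ E →
      ∑ t ∈ Finset.range τ,
          ∫ ω, ‖gradient f (w t ω)‖ ^ 2 ∂(Measure.pi fun _ : Fin E => μB)
        ≤ ((τ : ℝ) / 3) * (8 * ‖gradient f wk‖ ^ 2 + σ ^ 2) := by
  intro τ hτ
  have hmoment := lintegral_ofReal_norm_sq_le hGint hGunb hGvarInt hGvar
  have hηL : 0 ≤ η * L := (mul_pos hη hL).le
  have hτstep : η * L * τ ≤ 1 / 2 :=
    (mul_le_mul_of_nonneg_left (by exact_mod_cast hτ) hηL).trans hstep
  calc ∑ t ∈ range τ, ∫ ω, ‖gradient f (w t ω)‖ ^ 2 ∂(Measure.pi fun _ : Fin E => μB)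
      ≤ ∑ t ∈ range τ, (4 * (η * L * t) ^ 2 * (2 * ‖gradient f wk‖ ^ 2 + σ ^ 2)
          + 2 * ‖gradient f wk‖ ^ 2) :=
        sum_le_sum fun t ht => integral_norm_sq_localSGD_le hw0 hw hsmooth hmoment hηL hstep
          ((mem_range.1 ht).le.trans hτ)
    _ ≤ τ * ((2 * ‖gradient f wk‖ ^ 2 + σ ^ 2) / 3 + 2 * ‖gradient f wk‖ ^ 2) :=
        sum_range_four_mul_sq_add_le hηL hτstep (by positivity)
    _ = τ / 3 * (8 * ‖gradient f wk‖ ^ 2 + σ ^ 2) := by ring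

/-- Lemma "sept26-lem1".
A single client with an `L`-smooth objective `f` runs `E` local SGD steps in round `k`,
starting at `wk = w_k`, with step size `η = η_k`: the batches `B_{k,0},…,B_{k,E−1}` are
the coordinates of the product probability space `Fin E → Bt`, and the stochastic
gradients `G · b` are unbiased with variance at most `σ²`.  If `η_k·L·E ≤ 1/2`, then
for every `τ ≤ E`,
`Σ_{t=0}^{τ−1} E[‖∇f(w_{k,t})‖²] ≤ (τ/3)·(8·E[‖∇f(w_k)‖²] + σ²)`
(the expectation is over the local batches of round `k`, so `E[‖∇f(w_k)‖²] = ‖∇f(w_k)‖²`). -/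
theorem stmt19
    {d : ℕ} {Bt : Type*} [MeasurableSpace Bt]
    (μB : Measure Bt) [IsProbabilityMeasure μB]
    (E : ℕ) (hE : 1 ≤ E) (η L σ : ℝ) (hη : 0 < η) (hL : 0 < L) (hσ : 0 ≤ σ)
    (f : EuclideanSpace ℝ (Fin d) → ℝ)
    (hdiff : Differentiable ℝ f)
    (hsmooth : ∀ x y, ‖gradient f x - gradient f y‖ ≤ L * ‖x - y‖)
    (G : EuclideanSpace ℝ (Fin d) → Bt → EuclideanSpace ℝ (Fin d))
    (hGint : ∀ x, Integrable (G x) μB)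
    (hGunb : ∀ x, ∫ b, G x b ∂μB = gradient f x)
    (hGvarInt : ∀ x, Integrable (fun b => ‖G x b - gradient f x‖ ^ 2) μB)
    (hGvar : ∀ x, ∫ b, ‖G x b - gradient f x‖ ^ 2 ∂μB ≤ σ ^ 2)
    (wk : EuclideanSpace ℝ (Fin d))
    (w : ℕ → (Fin E → Bt) → EuclideanSpace ℝ (Fin d))
    (hw0 : ∀ ω, w 0 ω = wk)
    (hw : ∀ τ (h : τ < E), ∀ ω, w (τ + 1) ω = w τ ω - η • G (w τ ω) (ω ⟨τ, h⟩))
    (hstep : η * L * E ≤ 1 / 2) :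
    ∀ τ, τ ≤ E →
      ∑ t ∈ Finset.range τ,
          ∫ ω, ‖gradient f (w t ω)‖ ^ 2 ∂(Measure.pi fun _ : Fin E => μB)
        ≤ ((τ : ℝ) / 3) * (8 * ‖gradient f wk‖ ^ 2 + σ ^ 2) :=
  stmt19_general μB E η L σ hη hL f hsmooth G hGint hGunb hGvarInt hGvar wk w hw0 hw hstep
end
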